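/- arXiv:0710.4031 — 15 statements merged into one kernel-verified Lean document; each statement's English description precedes it below -/
import Mathlib

section
/- Let b ≥ 2 and m ≥ 1 be integers. The generalized Thue–Morse word t_{b,m} is overlap-free if and only if b ≤ m. Equivalently: there exist i ≥ 0 and ℓ ≥ 1 such that t(i+j) = t(i+j+ℓ) for all 0 ≤ j < ℓ+1 (an occurrence of an overlap, i.e., a (2ℓ+1)/ℓ-power) if and only if b > m. -/
/-- The generalized Thue–Morse word: `t b m n = s_b(n) mod m`, valued in `ZMod m`. -/
def genTM (b m n : ℕ) : ZMod m := ((Nat.digits b n).sum : ZMod m)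

namespace GenTMAux

/-- Number of trailing `b-1` digits of `n` in base `b`. -/
def V (b n : ℕ) : ℕ := ((Nat.digits b n).takeWhile (fun d => d = b - 1)).length

lemma sum_digits_mul_add {b : ℕ} (hb : 2 ≤ b) (k r : ℕ) (hr : r < b) :
    (Nat.digits b (b * k + r)).sum = (Nat.digits b k).sum + r := by
  rcases Nat.eq_zero_or_pos (b * k + r) with h | h
  · have hk : k = 0 := by
      rcases Nat.eq_zero_or_pos k with h' | h'
      · exact h'
      · exfalso; nlinarith
    have hr0 : r = 0 := by omega
    simp [hk, hr0]
  · rw [Nat.digits_def' (by omega : 1 < b) h]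
    have h1 : (b * k + r) % b = r := by
      rw [Nat.mul_add_mod, Nat.mod_eq_of_lt hr]
    have h2 : (b * k + r) / b = k := by
      rw [Nat.mul_add_div (by omega), Nat.div_eq_of_lt hr, Nat.add_zero]
    rw [h1, h2]; simp [Nat.add_comm]

lemma V_zero {b n : ℕ} (hb : 2 ≤ b) (h : n % b ≠ b - 1) : V b n = 0 := by
  rcases Nat.eq_zero_or_pos n with rfl | hn
  · simp [V]
  · rw [V, Nat.digits_def' (by omega : 1 < b) hn]
    simp [List.takeWhile_cons, h]

lemma V_cons {b n : ℕ} (hb : 2 ≤ b) (h : n % b = b - 1) : V b n = V b (n / b) + 1 := by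
  have hn : 0 < n := by
    rcases Nat.eq_zero_or_pos n with rfl | hn
    · simp at h; omega
    · exact hn
  rw [V, Nat.digits_def' (by omega : 1 < b) hn]
  simp [List.takeWhile_cons, h, V]

lemma V_pos {b n : ℕ} (hb : 2 ≤ b) (h : n % b = b - 1) : 1 ≤ V b n := by
  rw [V_cons hb h]; omega

lemma sdig_succ {b : ℕ} (hb : 2 ≤ b) :
    ∀ n, (Nat.digits b (n + 1)).sum + (b - 1) * V b n = (Nat.digits b n).sum + 1 := by
  intro n
  induction n using Nat.strong_induction_on with
  | _ n IH =>
    have h0 := Nat.div_add_mod n b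
    rcases eq_or_ne (n % b) (b - 1) with h | h
    · rw [h] at h0
      set q := n / b with hq
      have hqn : q < n := by
        have : q ≤ b * q := Nat.le_mul_of_pos_left q (by omega)
        omega
      have hn1 : n + 1 = b * (q + 1) + 0 := by
        rw [Nat.mul_add, Nat.mul_one, Nat.add_zero]; omega
      have hS1 : (Nat.digits b (n + 1)).sum = (Nat.digits b (q + 1)).sum := by
        rw [hn1, sum_digits_mul_add hb _ 0 (by omega), Nat.add_zero]
      have hSn : (Nat.digits b n).sum = (Nat.digits b q).sum + (b - 1) := by
        conv_lhs => rw [← h0]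
        rw [sum_digits_mul_add hb _ _ (by omega)]
      have hV : V b n = V b q + 1 := V_cons hb h
      have := IH q hqn
      rw [hS1, hSn, hV]
      rw [Nat.mul_add, Nat.mul_one]
      omega
    · have hrlt : n % b < b := Nat.mod_lt _ (by omega)
      set q := n / b with hq
      set r := n % b with hr
      have hr1 : r + 1 < b := by omega
      have hn1 : n + 1 = b * q + (r + 1) := by omega
      have hS1 : (Nat.digits b (n + 1)).sum = (Nat.digits b q).sum + (r + 1) := by
        rw [hn1, sum_digits_mul_add hb _ _ hr1]
      have hSn : (Nat.digits b n).sum = (Nat.digits b q).sum + r := by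
        conv_lhs => rw [← h0]
        rw [sum_digits_mul_add hb _ _ (by omega)]
      rw [hS1, hSn, V_zero hb h]
      omega

lemma sdig_add {b : ℕ} (hb : 2 ≤ b) (i : ℕ) :
    ∀ ℓ, (Nat.digits b (i + ℓ)).sum + (b - 1) * (∑ j ∈ Finset.range ℓ, V b (i + j))
      = (Nat.digits b i).sum + ℓ := by
  intro ℓ
  induction ℓ with
  | zero => simp
  | succ ℓ IH =>
    rw [Finset.sum_range_succ, Nat.mul_add]
    have h1 := sdig_succ hb (i + ℓ)
    have e : i + (ℓ + 1) = (i + ℓ) + 1 := by omega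
    rw [e]
    omega

lemma V_ge_pow {b : ℕ} (hb : 2 ≤ b) : ∀ c n, c ≤ V b n → b ^ c ∣ n + 1 := by
  intro c
  induction c with
  | zero => intro n _; simpa using one_dvd _
  | succ c IH =>
    intro n hc
    have hmod : n % b = b - 1 := by
      by_contra h
      rw [V_zero hb h] at hc; omega
    have h2 : c ≤ V b (n / b) := by
      rw [V_cons hb hmod] at hc; omega
    have h3 : b ^ c ∣ n / b + 1 := IH _ h2
    have h0 := Nat.div_add_mod n b
    have hn1 : n + 1 = b * (n / b + 1) := by
      rw [Nat.mul_add, Nat.mul_one]; omega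
    rw [hn1, pow_succ, mul_comm (b ^ c) b]
    exact mul_dvd_mul_left b h3

lemma mod_eq_of_dvd_succ {b n : ℕ} (hb : 2 ≤ b) (h : b ∣ n + 1) : n % b = b - 1 := by
  obtain ⟨c, hc⟩ := h
  have hc1 : 1 ≤ c := by nlinarith
  have hn : n = b * (c - 1) + (b - 1) := by
    have h2 : b * c = b * (c - 1 + 1) := by congr 1; omega
    rw [Nat.mul_add, Nat.mul_one] at h2
    omega
  rw [hn, Nat.mul_add_mod, Nat.mod_eq_of_lt (by omega)]

lemma dvd_succ_of_mod {b n : ℕ} (hb : 2 ≤ b) (h : n % b = b - 1) : b ∣ n + 1 := by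
  have h0 := Nat.div_add_mod n b
  exact ⟨n / b + 1, by rw [Nat.mul_add, Nat.mul_one]; omega⟩

lemma genTM_mul_add {b m : ℕ} (hb : 2 ≤ b) {k r : ℕ} (hr : r < b) :
    genTM b m (b * k + r) = genTM b m k + (r : ZMod m) := by
  unfold genTM
  rw [sum_digits_mul_add hb k r hr]
  push_cast
  ring

lemma genTM_succ {b m : ℕ} (hb : 2 ≤ b) (n : ℕ) :
    genTM b m (n + 1) + ((b - 1 : ℕ) : ZMod m) * (V b n : ZMod m) = genTM b m n + 1 := by
  have h := congrArg (fun x : ℕ => (x : ZMod m)) (sdig_succ hb n)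
  simp only [Nat.cast_add, Nat.cast_mul, Nat.cast_one] at h
  unfold genTM
  exact h

lemma dvd_helper1 {b m : ℕ} (hm : 0 < m) (c : ℕ) (h : m ∣ (b - 1) * c) :
    (m / Nat.gcd m (b - 1)) ∣ c := by
  set g := Nat.gcd m (b - 1) with hg
  have hgpos : 0 < g := Nat.gcd_pos_of_pos_left _ hm
  obtain ⟨d, hd⟩ := Nat.gcd_dvd_left m (b - 1)
  obtain ⟨e, he⟩ := Nat.gcd_dvd_right m (b - 1)
  have hdg : m / g = d := by rw [hd]; exact Nat.mul_div_cancel_left _ hgpos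
  have heg : (b - 1) / g = e := by rw [he]; exact Nat.mul_div_cancel_left _ hgpos
  have hco : Nat.Coprime (m / g) ((b - 1) / g) := Nat.coprime_div_gcd_div_gcd hgpos
  rw [hdg, heg] at hco
  rw [hdg]
  obtain ⟨f, hf⟩ := h
  have hde : d ∣ c * e := by
    refine ⟨f, ?_⟩
    have h2 : g * (e * c) = g * (d * f) := by
      rw [← Nat.mul_assoc, ← he, ← Nat.mul_assoc, ← hd, hf]
    have h3 : e * c = d * f := Nat.eq_of_mul_eq_mul_left hgpos h2
    rw [← h3]; ring
  exact Nat.Coprime.dvd_of_dvd_mul_right hco hde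

lemma dvd_helper2 {b m : ℕ} (hm : 0 < m) : m ∣ (b - 1) * (m / Nat.gcd m (b - 1)) := by
  set g := Nat.gcd m (b - 1) with hg
  have h1 : g ∣ m := Nat.gcd_dvd_left m (b - 1)
  obtain ⟨e, he⟩ : g ∣ b - 1 := Nat.gcd_dvd_right m (b - 1)
  refine ⟨e, ?_⟩
  rw [he, mul_comm g e, mul_assoc, Nat.mul_div_cancel' h1]
  ring

lemma d_two {b m : ℕ} (hb : 2 ≤ b) (hbm : b ≤ m) : 2 ≤ m / Nat.gcd m (b - 1) := by
  have hm : 0 < m := by omega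
  set g := Nat.gcd m (b - 1) with hg
  have hgpos : 0 < g := Nat.gcd_pos_of_pos_left _ hm
  have h1 : g * (m / g) = m := Nat.mul_div_cancel' (Nat.gcd_dvd_left m (b - 1))
  have hdpos : 0 < m / g := Nat.div_pos (Nat.le_of_dvd hm (Nat.gcd_dvd_left m (b - 1))) hgpos
  rcases eq_or_ne (m / g) 1 with h | h
  · exfalso
    rw [h, Nat.mul_one] at h1
    have h2 : m ∣ b - 1 := h1 ▸ Nat.gcd_dvd_right m (b - 1)
    have := Nat.le_of_dvd (by omega) h2
    omega
  · omega

lemma no_overlap {b m : ℕ} (hb : 2 ≤ b) (hbm : b ≤ m) :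
    ∀ ℓ i, 1 ≤ ℓ → (∀ j, j ≤ ℓ → genTM b m (i + j) = genTM b m (i + j + ℓ)) → False := by
  have hm : 0 < m := by omega
  haveI : NeZero m := ⟨by omega⟩
  intro ℓ
  induction ℓ using Nat.strong_induction_on with
  | _ ℓ IH =>
    intro i hl H
    by_cases hdvd : b ∣ ℓ
    · -- reduce to ℓ / b
      obtain ⟨ℓ', rfl⟩ := hdvd
      have hl' : 1 ≤ ℓ' := by
        rcases Nat.eq_zero_or_pos ℓ' with rfl | h
        · simp at hl
        · exact h
      obtain ⟨q, r, hr, rfl⟩ : ∃ q r, r < b ∧ i = b * q + r :=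
        ⟨i / b, i % b, Nat.mod_lt _ (by omega), (Nat.div_add_mod i b).symm⟩
      refine IH ℓ' ?_ q hl' ?_
      · have : 2 * ℓ' ≤ b * ℓ' := Nat.mul_le_mul_right _ hb
        omega
      · intro j hj
        have h1 := H (b * j) (Nat.mul_le_mul_left b hj)
        rw [show b * q + r + b * j = b * (q + j) + r by ring] at h1
        rw [show b * (q + j) + r + b * ℓ' = b * (q + j + ℓ') + r by ring] at h1
        rw [genTM_mul_add hb hr, genTM_mul_add hb hr] at h1
        exact add_right_cancel h1
    · -- b ∤ ℓ
      set d := m / Nat.gcd m (b - 1) with hd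
      have hd2 : 2 ≤ d := d_two hb hbm
      have Vper : ∀ j, j < ℓ →
          ((b - 1 : ℕ) : ZMod m) * (V b (i + j) : ZMod m)
            = ((b - 1 : ℕ) : ZMod m) * (V b (i + j + ℓ) : ZMod m) := by
        intro j hj
        have h1 := H j (by omega)
        have h2 := H (j + 1) (by omega)
        rw [show i + (j + 1) = i + j + 1 by omega] at h2
        rw [show i + j + 1 + ℓ = i + j + ℓ + 1 by omega] at h2
        have g1 := genTM_succ (m := m) hb (i + j)
        have g2 := genTM_succ (m := m) hb (i + j + ℓ)
        linear_combination g1 - g2 - h2 + h1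
      have A1 : ∀ j, j < ℓ → b ∣ i + j + 1 → d ∣ V b (i + j) := by
        intro j hj hdvd1
        have hV0 : V b (i + j + ℓ) = 0 := by
          apply V_zero hb
          intro hcon
          have hz : b ∣ i + j + ℓ + 1 := dvd_succ_of_mod hb hcon
          have hb2 : b ∣ ℓ := by
            have h3 := Nat.dvd_sub hz hdvd1
            simpa [show i + j + ℓ + 1 - (i + j + 1) = ℓ by omega] using h3
          exact hdvd hb2
        have h4 := Vper j hj
        rw [hV0] at h4
        simp only [Nat.cast_zero, mul_zero] at h4
        have hcast : (((b - 1) * V b (i + j) : ℕ) : ZMod m) = 0 := by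
          rw [Nat.cast_mul]; exact h4
        exact dvd_helper1 hm _ ((ZMod.natCast_eq_zero_iff _ _).mp hcast)
      have A2 : ∀ j, j < ℓ → b ∣ i + j + ℓ + 1 → d ∣ V b (i + j + ℓ) := by
        intro j hj hdvd1
        have hV0 : V b (i + j) = 0 := by
          apply V_zero hb
          intro hcon
          have hz : b ∣ i + j + 1 := dvd_succ_of_mod hb hcon
          have hb2 : b ∣ ℓ := by
            have h3 := Nat.dvd_sub hdvd1 hz
            simpa [show i + j + ℓ + 1 - (i + j + 1) = ℓ by omega] using h3
          exact hdvd hb2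
        have h4 := Vper j hj
        rw [hV0] at h4
        simp only [Nat.cast_zero, mul_zero, zero_mul] at h4
        have hcast : (((b - 1) * V b (i + j + ℓ) : ℕ) : ZMod m) = 0 := by
          rw [Nat.cast_mul]; exact h4.symm
        exact dvd_helper1 hm _ ((ZMod.natCast_eq_zero_iff _ _).mp hcast)
      have A : ∀ w, i + 1 ≤ w → w ≤ i + 2 * ℓ → b ∣ w → b ^ 2 ∣ w := by
        intro w hw1 hw2 hwb
        rcases le_or_gt w (i + ℓ) with hcase | hcase
        · have hj : w - i - 1 < ℓ := by omega
          have hw : i + (w - i - 1) + 1 = w := by omega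
          have h1 : d ∣ V b (i + (w - i - 1)) := A1 _ hj (by rw [hw]; exact hwb)
          have h2 : 1 ≤ V b (i + (w - i - 1)) :=
            V_pos hb (mod_eq_of_dvd_succ hb (by rw [hw]; exact hwb))
          have h3 : 2 ≤ V b (i + (w - i - 1)) := by
            have := Nat.le_of_dvd (by omega) h1
            omega
          have h5 := V_ge_pow hb 2 _ h3
          rwa [hw] at h5
        · have hj : w - i - ℓ - 1 < ℓ := by omega
          have hw : i + (w - i - ℓ - 1) + ℓ + 1 = w := by omega
          have h1 : d ∣ V b (i + (w - i - ℓ - 1) + ℓ) := A2 _ hj (by rw [hw]; exact hwb)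
          have h2 : 1 ≤ V b (i + (w - i - ℓ - 1) + ℓ) :=
            V_pos hb (mod_eq_of_dvd_succ hb (by rw [hw]; exact hwb))
          have h3 : 2 ≤ V b (i + (w - i - ℓ - 1) + ℓ) := by
            have := Nat.le_of_dvd (by omega) h1
            omega
          have h5 := V_ge_pow hb 2 _ h3
          rwa [hw] at h5
      rcases le_or_gt b ℓ with hcase | hcase
      · -- ℓ ≥ b : two consecutive multiples of b, both divisible by b², contradiction
        have h0 := Nat.div_add_mod i b
        have hmod : i % b < b := Nat.mod_lt _ (by omega)
        set q := i / b with hq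
        set r := i % b with hr
        have hyb : b ∣ b * q + b := ⟨q + 1, by ring⟩
        have hzb : b ∣ b * q + b + b := ⟨q + 2, by ring⟩
        have d1 : b ^ 2 ∣ b * q + b := A _ (by omega) (by omega) hyb
        have d2 : b ^ 2 ∣ b * q + b + b := A _ (by omega) (by omega) hzb
        have d3 : b ^ 2 ∣ b := by
          have h6 := Nat.dvd_sub d2 d1
          simpa using h6
        have := Nat.le_of_dvd (by omega) d3
        nlinarith
      · -- ℓ < b : sum identity forces m ∣ ℓ
        have hs := congrArg (fun x : ℕ => (x : ZMod m)) (sdig_add hb i ℓ)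
        simp only [Nat.cast_add, Nat.cast_mul] at hs
        have h0 := H 0 (by omega)
        simp only [Nat.add_zero] at h0
        have hgen : ((Nat.digits b (i + ℓ)).sum : ZMod m) = ((Nat.digits b i).sum : ZMod m) := by
          have h7 := h0.symm
          unfold genTM at h7
          exact h7
        have hsum : d ∣ ∑ j ∈ Finset.range ℓ, V b (i + j) := by
          apply Finset.dvd_sum
          intro j hj
          rw [Finset.mem_range] at hj
          by_cases hc : b ∣ i + j + 1
          · exact A1 j hj hc
          · have h8 : V b (i + j) = 0 := by
              apply V_zero hb
              intro hcon
              exact hc (dvd_succ_of_mod hb hcon)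
            rw [h8]
            exact dvd_zero d
        have hmsum : m ∣ (b - 1) * ∑ j ∈ Finset.range ℓ, V b (i + j) := by
          obtain ⟨k, hk⟩ := hsum
          rw [hk, ← mul_assoc]
          exact Dvd.dvd.mul_right (dvd_helper2 hm) k
        have hzero : (((b - 1) * ∑ j ∈ Finset.range ℓ, V b (i + j) : ℕ) : ZMod m) = 0 :=
          (ZMod.natCast_eq_zero_iff _ _).mpr hmsum
        rw [Nat.cast_mul] at hzero
        have hℓ0 : ((ℓ : ℕ) : ZMod m) = 0 := by
          linear_combination hgen + hzero - hs
        have h9 : m ∣ ℓ := (ZMod.natCast_eq_zero_iff _ _).mp hℓ0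
        have := Nat.le_of_dvd (by omega) h9
        omega

lemma sdig_pow {b : ℕ} (hb : 2 ≤ b) : ∀ k, (Nat.digits b (b ^ k)).sum = 1 := by
  intro k
  induction k with
  | zero =>
    rw [pow_zero, Nat.digits_def' (by omega : 1 < b) (by omega)]
    rw [Nat.mod_eq_of_lt (by omega), Nat.div_eq_of_lt (by omega)]
    simp
  | succ k IH =>
    have h : b ^ (k + 1) = b * b ^ k + 0 := by rw [pow_succ]; ring
    rw [h, sum_digits_mul_add hb _ 0 (by omega), IH]

lemma sdig_pow_sub_one {b : ℕ} (hb : 2 ≤ b) :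
    ∀ k, (Nat.digits b (b ^ k - 1)).sum = k * (b - 1) := by
  intro k
  induction k with
  | zero => simp
  | succ k IH =>
    have hpk : 1 ≤ b ^ k := Nat.one_le_pow _ _ (by omega)
    have h : b ^ (k + 1) - 1 = b * (b ^ k - 1) + (b - 1) := by
      have h2 : b * (b ^ k - 1) = b ^ (k + 1) - b := by
        rw [Nat.mul_sub, pow_succ, Nat.mul_one, mul_comm]
      have h3 : b ≤ b ^ (k + 1) := Nat.le_self_pow (by omega) b
      omega
    rw [h, sum_digits_mul_add hb _ _ (by omega), IH, Nat.succ_mul]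

end GenTMAux

open GenTMAux in
/-- `t_{b,m}` contains an overlap (a window of length `2ℓ+1` with
period `ℓ` for some `ℓ ≥ 1`) if and only if `b > m`. -/
theorem genTM_overlap_iff (b m : ℕ) (hb : 2 ≤ b) (hm : 1 ≤ m) :
    (∃ i ℓ : ℕ, 1 ≤ ℓ ∧ ∀ j : ℕ, j < ℓ + 1 →
      genTM b m (i + j) = genTM b m (i + j + ℓ)) ↔ b > m := by
  constructor
  · rintro ⟨i, ℓ, hl, H⟩
    by_contra hle
    push_neg at hle
    exact no_overlap hb hle ℓ i hl (fun j hj => H j (by omega))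
  · intro hbm
    haveI : NeZero m := ⟨by omega⟩
    set P := b ^ (m - 1) with hP
    have hP1 : 1 ≤ P := Nat.one_le_pow _ _ (by omega)
    refine ⟨b * (P - 1), m, hm, ?_⟩
    intro j hj
    have hjb : j < b := by omega
    rw [genTM_mul_add hb hjb]
    have hA : genTM b m (P - 1) = (((m - 1) * (b - 1) : ℕ) : ZMod m) := by
      unfold genTM
      rw [hP, sdig_pow_sub_one hb]
    rcases lt_or_ge (j + m) b with hcase | hcase
    · rw [show b * (P - 1) + j + m = b * (P - 1) + (j + m) by omega]
      rw [genTM_mul_add hb hcase]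
      have hjm : ((j + m : ℕ) : ZMod m) = (j : ZMod m) := by
        push_cast
        rw [ZMod.natCast_self]
        ring
      rw [hjm]
    · have hr' : j + m - b < b := by omega
      have e3 : b * (P - 1 + 1) = b * (P - 1) + b := by rw [Nat.mul_add, Nat.mul_one]
      have e4 : b * (P - 1) + b = b * P := by rw [← e3]; congr 1; omega
      rw [show b * (P - 1) + j + m = b * P + (j + m - b) by omega]
      rw [genTM_mul_add hb hr']
      have hgP : genTM b m P = (1 : ZMod m) := by
        unfold genTM
        rw [hP, sdig_pow hb]
        simp
      rw [hA, hgP]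
      have hid : ((m - 1) * (b - 1) : ℕ) + (m + b) = m * b + 1 := by
        cases m with
        | zero => omega
        | succ m' =>
          cases b with
          | zero => omega
          | succ b' =>
            simp only [Nat.succ_sub_one]
            ring
      have hidc := congrArg (fun x : ℕ => (x : ZMod m)) hid
      push_cast at hidc
      rw [ZMod.natCast_self] at hidc
      have hjc : ((j : ℕ) : ZMod m) = ((b : ℕ) : ZMod m) + ((j + m - b : ℕ) : ZMod m) := by
        have h5 : ((j + m : ℕ) : ZMod m) = ((b + (j + m - b) : ℕ) : ZMod m) := by
          congr 1; omega
        push_cast at h5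
        rw [ZMod.natCast_self] at h5
        linear_combination h5
      push_cast at hjc ⊢
      linear_combination hidc + hjc
end

section
/- Let b ≥ 2 and m ≥ 1 be integers. The word t_{b,m} is (purely) periodic, i.e., there exists p ≥ 1 with t(n+p) = t(n) for all n ∈ ℕ, if and only if m divides b − 1. Moreover, if m divides b − 1, then t(n) = n mod m for every n ∈ ℕ (so t is the periodic word (0 1 2 ⋯ (m−1))^ω). -/
namespace Nat

theorem digits_sum_add_base_mul {b r : ℕ} (hb : 1 < b) (hr : r < b) (x : ℕ) :
    (digits b (r + b * x)).sum = r + (digits b x).sum := by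
  by_cases h : r ≠ 0 ∨ x ≠ 0
  · rw [digits_add b hb r x hr h, List.sum_cons]
  · obtain ⟨rfl, rfl⟩ : r = 0 ∧ x = 0 := by tauto
    simp

/-- The base-`b` digits of `b ^ k - 1 - x` are the complements `b - 1 - dᵢ` of the `k` digits
`dᵢ` of `x` (padded with zeros). -/
theorem digits_sum_pow_sub_one_sub_add {b k x : ℕ} (hb : 1 < b) (hx : x < b ^ k) :
    (digits b (b ^ k - 1 - x)).sum + (digits b x).sum = k * (b - 1) := by
  induction k generalizing x with
  | zero =>
    obtain rfl : x = 0 := by simpa using hx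
    simp
  | succ k ih =>
    obtain ⟨r, u, hr, rfl⟩ : ∃ r u, r < b ∧ x = r + b * u :=
      ⟨x % b, x / b, mod_lt x (by omega), (mod_add_div x b).symm⟩
    have hu : u < b ^ k := by
      rw [pow_succ'] at hx
      exact Nat.lt_of_mul_lt_mul_left (by omega : b * u < b * b ^ k)
    obtain ⟨y, hy⟩ : ∃ y, b ^ k = y + 1 + u := ⟨b ^ k - 1 - u, by omega⟩
    have hpow : b ^ (k + 1) = b * y + b + b * u := by rw [pow_succ', hy]; ring
    have hsplit : b ^ (k + 1) - 1 - (r + b * u) = (b - 1 - r) + b * y := by omega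
    have hyu : y = b ^ k - 1 - u := by omega
    rw [hsplit, digits_sum_add_base_mul hb (by omega), digits_sum_add_base_mul hb hr, hyu,
      succ_mul, ← ih hu]
    omega

end Nat

theorem genTM_mul_base {b : ℕ} (hb : 1 < b) (m x : ℕ) : genTM b m (b * x) = genTM b m x := by
  have h := Nat.digits_sum_add_base_mul hb (by omega : 0 < b) x
  simp only [zero_add] at h
  simp only [genTM, h]

theorem genTM_eq_natCast_of_dvd {b m : ℕ} (hb : 1 ≤ b) (h : m ∣ b - 1) (n : ℕ) :
    genTM b m n = n := by
  have hb1 : (b : ZMod m) = 1 := by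
    rw [← Nat.sub_add_cancel hb, Nat.cast_add, (ZMod.natCast_eq_zero_iff _ _).mpr h, zero_add,
      Nat.cast_one]
  conv_rhs => rw [← Nat.ofDigits_digits b n, Nat.coe_ofDigits, hb1, ← Nat.cast_one,
    ← Nat.coe_ofDigits, Nat.ofDigits_one]
  rfl

theorem dvd_sub_one_of_genTM_periodic {b m p : ℕ} (hb : 1 < b) (hp : 1 ≤ p)
    (hper : ∀ n, genTM b m (n + p) = genTM b m n) : m ∣ b - 1 := by
  have key : ∀ k, p ≤ b ^ k → genTM b m (b ^ k) + genTM b m (p - 1) = (k * (b - 1) : ℕ) := by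
    intro k hk
    have hcompl := Nat.digits_sum_pow_sub_one_sub_add hb (by omega : p - 1 < b ^ k)
    have hshift : b ^ k - 1 - (p - 1) + p = b ^ k := by omega
    rw [← hshift, hper, ← hcompl]
    simp [genTM]
  have hp_le : p ≤ b ^ p := (Nat.lt_pow_self hb).le
  have h₀ := key p hp_le
  have h₁ := key (p + 1) (hp_le.trans (Nat.pow_le_pow_right (by omega) (by omega)))
  rw [pow_succ', genTM_mul_base hb, h₀, Nat.succ_mul, Nat.cast_add, left_eq_add] at h₁
  exact (ZMod.natCast_eq_zero_iff _ _).mp h₁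

/-- `t_{b,m}` is purely periodic iff `m ∣ (b - 1)`; moreover, in the
periodic case, `t(n) = n mod m` for all `n`. -/
theorem genTM_periodic_iff (b m : ℕ) (hb : 2 ≤ b) (hm : 1 ≤ m) :
    ((∃ p : ℕ, 1 ≤ p ∧ ∀ n : ℕ, genTM b m (n + p) = genTM b m n) ↔ m ∣ (b - 1)) ∧
    (m ∣ (b - 1) → ∀ n : ℕ, genTM b m n = (n : ZMod m)) := by
  have hcast : m ∣ b - 1 → ∀ n, genTM b m n = n := genTM_eq_natCast_of_dvd (by omega)
  refine ⟨⟨fun ⟨p, hp, hper⟩ => dvd_sub_one_of_genTM_periodic hb hp hper, fun h => ?_⟩, hcast⟩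
  exact ⟨m, hm, fun n => by simp [hcast h]⟩
end

section
/- Let b ≥ 2 and m ≥ 1 be integers. Suppose the window [i, i+ℓ) of t_{b,m} is σ-cyclic, i.e., t(i+j) = t(i) + j in ℤ/mℤ for all 0 ≤ j < ℓ, and suppose this window overlaps three consecutive blocks: there exists k ≥ 1 with i < kb and (k+1)b < i + ℓ. Then m divides b − 1 (so t is periodic). -/
lemma sum_digits_succ_aux (b n : ℕ) (hb : 2 ≤ b) (h : n % b ≠ b - 1) :
    (Nat.digits b (n + 1)).sum = (Nat.digits b n).sum + 1 := by
  have hb1 : 1 < b := hb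
  have hmodlt : n % b < b := Nat.mod_lt _ (by omega)
  have hmod1 : n % b + 1 < b := by omega
  have hmodsucc : (n + 1) % b = n % b + 1 := by
    rw [Nat.add_mod, Nat.mod_eq_of_lt (show (1:ℕ) < b from hb1), Nat.mod_eq_of_lt hmod1]
  have hdvd : ¬ b ∣ (n + 1) := by
    intro hd
    have : (n + 1) % b = 0 := Nat.mod_eq_zero_of_dvd hd
    omega
  have hdiv : (n + 1) / b = n / b := by
    rw [Nat.succ_div, if_neg hdvd]
    omega
  rcases Nat.eq_zero_or_pos n with hn | hn
  · subst hn
    simp [Nat.digits_def' hb1 (show (0:ℕ) < 1 by norm_num), Nat.mod_eq_of_lt hb1,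
      Nat.div_eq_of_lt hb1]
  · rw [Nat.digits_def' hb1 (by omega : 0 < n + 1), Nat.digits_def' hb1 hn,
      hmodsucc, hdiv, List.sum_cons, List.sum_cons]
    omega

lemma genTM_key (b m K : ℕ) (hb : 2 ≤ b) (hK : 1 ≤ K) (hKb : (K - 1) % b ≠ b - 1)
    (hrel : genTM b m (K * b) = genTM b m (K * b - 1) + 1) :
    ((b - 1 : ℕ) : ZMod m) = 0 := by
  obtain ⟨K', rfl⟩ : ∃ K', K = K' + 1 := ⟨K - 1, by omega⟩
  have hb1 : 1 < b := hb
  have hbpos : 0 < b := by omega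
  -- digit sum of K*b
  have hKbpos : 0 < (K' + 1) * b := by positivity
  have e1 : Nat.digits b ((K' + 1) * b) = 0 :: Nat.digits b (K' + 1) := by
    rw [Nat.digits_def' hb1 hKbpos, Nat.mul_mod_left, Nat.mul_div_cancel _ hbpos]
  -- K*b - 1 = b * K' + (b - 1)
  have e0 : (K' + 1) * b - 1 = b * K' + (b - 1) := by
    have : (K' + 1) * b = K' * b + b := by ring
    have : (K' + 1) * b = b * K' + b := by rw [this]; ring_nf
    omega
  have hpos2 : 0 < b * K' + (b - 1) := by omega
  have e2 : Nat.digits b ((K' + 1) * b - 1) = (b - 1) :: Nat.digits b K' := by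
    rw [e0, Nat.digits_def' hb1 hpos2]
    congr 1
    · rw [Nat.mul_add_mod, Nat.mod_eq_of_lt (by omega)]
    · rw [Nat.mul_add_div hbpos, Nat.div_eq_of_lt (by omega), Nat.add_zero]
  have hsucc : (Nat.digits b (K' + 1)).sum = (Nat.digits b K').sum + 1 :=
    sum_digits_succ_aux b K' hb (by simpa using hKb)
  unfold genTM at hrel
  rw [e1, e2, List.sum_cons, List.sum_cons, hsucc] at hrel
  push_cast at hrel
  linear_combination -hrel

/-- if a σ-cyclic window `[i, i+ℓ)` of `t_{b,m}` overlaps three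
consecutive blocks (there is `k ≥ 1` with `i < k·b` and `(k+1)·b < i + ℓ`),
then `m ∣ (b - 1)`, i.e. `t` is periodic. -/
theorem genTM_sigma_cyclic_three_blocks (b m i ℓ k : ℕ) (hb : 2 ≤ b) (hm : 1 ≤ m)
    (hcyc : ∀ j : ℕ, j < ℓ → genTM b m (i + j) = genTM b m i + (j : ZMod m))
    (hk : 1 ≤ k) (h1 : i < k * b) (h2 : (k + 1) * b < i + ℓ) :
    m ∣ (b - 1) := by
  haveI : NeZero m := ⟨by omega⟩
  have hkb : k * b + b = (k + 1) * b := by ring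
  have step : ∀ n, i ≤ n → n + 1 < i + ℓ → genTM b m (n + 1) = genTM b m n + 1 := by
    intro n hn hlt
    have h1' := hcyc (n - i) (by omega)
    have h2' := hcyc (n - i + 1) (by omega)
    have e1 : i + (n - i) = n := by omega
    have e2 : i + (n - i + 1) = n + 1 := by omega
    rw [e1] at h1'
    rw [e2] at h2'
    rw [h2', h1']
    push_cast
    ring
  have hkbpos : 1 ≤ k * b := by
    calc 1 ≤ 1 * 2 := by norm_num
    _ ≤ k * b := Nat.mul_le_mul hk hb
  have hrelA : genTM b m (k * b) = genTM b m (k * b - 1) + 1 := by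
    have := step (k * b - 1) (by omega) (by omega)
    rwa [show k * b - 1 + 1 = k * b by omega] at this
  have hrelB : genTM b m ((k + 1) * b) = genTM b m ((k + 1) * b - 1) + 1 := by
    have := step ((k + 1) * b - 1) (by omega) (by omega)
    rwa [show (k + 1) * b - 1 + 1 = (k + 1) * b by omega] at this
  have key : ((b - 1 : ℕ) : ZMod m) = 0 := by
    by_cases hc : (k - 1) % b = b - 1
    · -- then k % b = 0 ≠ b - 1, use K = k + 1
      have hkmod : k % b = 0 := by
        have e : k = (k - 1) + 1 := by omega
        rw [e, Nat.add_mod, hc, Nat.mod_eq_of_lt (by omega : (1:ℕ) < b)]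
        simp [show b - 1 + 1 = b by omega]
      exact genTM_key b m (k + 1) hb (by omega)
        (by simpa using (by omega : ¬ (0 : ℕ) = b - 1) ∘ (hkmod ▸ ·)) hrelB
    · exact genTM_key b m k hb hk hc hrelA
  exact (ZMod.natCast_eq_zero_iff _ m).mp key
end

section
/- Let b ≥ 2 and m ≥ 1 be integers, and let ℓ ≥ 1 with b ∤ ℓ. Suppose that for some i ≥ 0 and some 1 ≤ ℓ' ≤ ℓ we have t(i+j) = t(i+ℓ+j) for all 0 ≤ j < ℓ' (i.e., the word wp occurs at position i, where w is the factor of length ℓ starting at i and p is its prefix of length ℓ'). Then p is σ-cyclic: t(i+j+1) = t(i+j) + 1 in ℤ/mℤ for all 0 ≤ j < ℓ' − 1. -/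
lemma genTM_step (b m n : ℕ) (hb : 2 ≤ b) (h : ¬ b ∣ (n + 1)) :
    genTM b m (n + 1) = genTM b m n + 1 := by
  unfold genTM
  rcases Nat.eq_zero_or_pos n with rfl | hn
  · rw [show (0:ℕ) + 1 = 1 by rfl, Nat.digits_def' (by omega : 1 < b) (by omega : 0 < 1)]
    simp [Nat.mod_eq_of_lt (by omega : 1 < b), Nat.div_eq_of_lt (by omega : 1 < b)]
  · have hmod : n % b < b := Nat.mod_lt n (by omega)
    have hr : n % b + 1 < b := by
      rcases Nat.lt_or_ge (n % b + 1) b with h1 | h1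
      · exact h1
      · refine absurd ⟨n / b + 1, ?_⟩ h
        have hb' : b * (n / b + 1) = b * (n / b) + b := by ring
        have := Nat.div_add_mod n b
        omega
    have h1 : (n + 1) % b = n % b + 1 := by
      rw [Nat.add_mod, Nat.mod_eq_of_lt (by omega : 1 < b), Nat.mod_eq_of_lt hr]
    have h2 : (n + 1) / b = n / b := by
      rw [Nat.succ_div, if_neg h]; omega
    rw [Nat.digits_def' (by omega : 1 < b) (by omega : 0 < n + 1),
        Nat.digits_def' (by omega : 1 < b) hn, h1, h2]
    push_cast [List.sum_cons]
    ring

/-- if `b ∤ ℓ` and `w p` occurs at position `i`, where `w` is the factor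
of length `ℓ` at `i` and `p` is its prefix of length `ℓ'` (i.e. `t(i+j) = t(i+ℓ+j)` for
all `j < ℓ'`), then `p` is σ-cyclic. -/
theorem genTM_prefix_sigma_cyclic (b m i ℓ ℓ' : ℕ) (hb : 2 ≤ b) (hm : 1 ≤ m)
    (hℓ : 1 ≤ ℓ) (hnd : ¬ b ∣ ℓ) (hℓ'1 : 1 ≤ ℓ') (hℓ' : ℓ' ≤ ℓ)
    (hocc : ∀ j : ℕ, j < ℓ' → genTM b m (i + j) = genTM b m (i + ℓ + j)) :
    ∀ j : ℕ, j < ℓ' - 1 → genTM b m (i + j + 1) = genTM b m (i + j) + 1 := by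
  intro j hj
  by_cases hd : b ∣ (i + j + 1)
  · have hd' : ¬ b ∣ (i + ℓ + j + 1) := by
      intro hd2
      have hs : i + ℓ + j + 1 - (i + j + 1) = ℓ := by omega
      exact hnd (hs ▸ Nat.dvd_sub hd2 hd)
    have step : genTM b m (i + ℓ + j + 1) = genTM b m (i + ℓ + j) + 1 :=
      genTM_step b m (i + ℓ + j) hb hd'
    have e1 := hocc j (by omega)
    have e2 := hocc (j + 1) (by omega)
    rw [show i + (j + 1) = i + j + 1 by ring, show i + ℓ + (j + 1) = i + ℓ + j + 1 by ring] at e2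
    rw [e2, step, ← e1]
  · exact genTM_step b m (i + j) hb hd
end

section
/- Let b ≥ 2 and m ≥ 1 be integers, and let ℓ ≥ 1 with b ∤ ℓ. Suppose that for some i ≥ 0 and L > 2ℓ, t has period ℓ on the window [i, i+L), i.e., t(i+j) = t(i+j+ℓ) for all 0 ≤ j < L − ℓ (so the factor w of length ℓ at position i occurs to a power e = L/ℓ > 2). Then the entire window is σ-cyclic: t(i+j+1) = t(i+j) + 1 in ℤ/mℤ for all 0 ≤ j < L − 1. -/
lemma digitsum_succ (b n : ℕ) (hb : 2 ≤ b) (h : ¬ b ∣ (n+1)) :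
    (Nat.digits b (n+1)).sum = (Nat.digits b n).sum + 1 := by
  have hb1 : 1 < b := hb
  rcases Nat.eq_zero_or_pos n with hn | hn
  · subst hn
    rw [Nat.digits_def' hb1 (by norm_num)]
    simp [Nat.mod_eq_of_lt hb1, Nat.div_eq_of_lt hb1]
  · have hmod : n % b < b := Nat.mod_lt _ (by omega)
    have hne : n % b + 1 < b := by
      rcases lt_or_eq_of_le (Nat.succ_le_of_lt hmod) with h' | h'
      · exact h'
      · exfalso
        apply h
        have := Nat.div_add_mod n b
        exact ⟨n / b + 1, by rw [Nat.mul_add, Nat.mul_one]; omega⟩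
    have hrep : n + 1 = (n % b + 1) + b * (n / b) := by
      have := Nat.div_add_mod n b; omega
    have hm1 : (n + 1) % b = n % b + 1 := by
      rw [hrep, Nat.add_mul_mod_self_left, Nat.mod_eq_of_lt hne]
    have hd1 : (n + 1) / b = n / b := by
      rw [hrep, Nat.add_mul_div_left _ _ (by omega : 0 < b),
        Nat.div_eq_of_lt hne, Nat.zero_add]
    rw [Nat.digits_def' hb1 (by omega : 0 < n + 1),
      Nat.digits_def' hb1 hn, hm1, hd1]
    simp [List.sum_cons]; ring

lemma genTM_succ (b m n : ℕ) (hb : 2 ≤ b) (h : ¬ b ∣ (n+1)) :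
    genTM b m (n+1) = genTM b m n + 1 := by
  unfold genTM
  rw [digitsum_succ b n hb h]
  push_cast
  ring

/-- if `b ∤ ℓ` and `t` has period `ℓ` on a window `[i, i+L)` with
`L > 2ℓ` (so a factor of length `ℓ` occurs to a power `> 2`), then the entire
window is σ-cyclic. -/
theorem genTM_power_sigma_cyclic (b m i ℓ L : ℕ) (hb : 2 ≤ b) (hm : 1 ≤ m)
    (hℓ : 1 ≤ ℓ) (hnd : ¬ b ∣ ℓ) (hL : 2 * ℓ < L)
    (hper : ∀ j : ℕ, j < L - ℓ → genTM b m (i + j) = genTM b m (i + j + ℓ)) :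
    ∀ j : ℕ, j < L - 1 → genTM b m (i + j + 1) = genTM b m (i + j) + 1 := by
  intro j hj
  by_cases hdvd : b ∣ (i + j + 1)
  · by_cases hcase : j + 1 < L - ℓ
    · -- shift forward by ℓ
      have h1 := hper j (by omega)
      have h2 := hper (j+1) hcase
      have hnd' : ¬ b ∣ (i + j + ℓ + 1) := by
        intro hc
        apply hnd
        have : i + j + ℓ + 1 = (i + j + 1) + ℓ := by ring
        rw [this] at hc
        exact (Nat.dvd_add_right hdvd).mp hc
      have h3 := genTM_succ b m (i + j + ℓ) hb hnd'
      have e2 : i + (j+1) + ℓ = i + j + ℓ + 1 := by ring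
      have e4 : i + (j+1) = i + j + 1 := by ring
      rw [e2, e4] at h2
      rw [h2, h3, h1]
    · -- shift backward by ℓ
      have hjℓ : ℓ ≤ j := by omega
      have h1 := hper (j - ℓ) (by omega)
      have h2 := hper (j - ℓ + 1) (by omega)
      have e1 : i + (j - ℓ) + ℓ = i + j := by omega
      have e2 : i + (j - ℓ + 1) + ℓ = i + j + 1 := by omega
      rw [e1] at h1
      rw [e2] at h2
      have hnd' : ¬ b ∣ (i + (j - ℓ) + 1) := by
        intro hc
        apply hnd
        have : i + j + 1 = (i + (j - ℓ) + 1) + ℓ := by omega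
        rw [this] at hdvd
        exact (Nat.dvd_add_right hc).mp hdvd
      have h3 := genTM_succ b m (i + (j - ℓ)) hb hnd'
      have e3 : i + (j - ℓ) + 1 = i + (j - ℓ + 1) := by omega
      rw [e3] at h3
      rw [← h2, ← h1, h3]
  · exact genTM_succ b m (i + j) hb hdvd
end

section
/- Let b ≥ 2 and m ≥ 1 be integers with m ∤ (b − 1) (so t_{b,m} is aperiodic). Let ℓ ≥ b be an integer with b ∤ ℓ. Then no factor of length ℓ has index greater than 2 in t: there is no i ≥ 0 such that t(i+j) = t(i+j+ℓ) for all 0 ≤ j < ℓ + 1 (i.e., no window of length 2ℓ+1 with period ℓ occurs in t). -/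
/-- Digit sum of `b*k + u` for `u < b`. -/
lemma dsum_eq (b k u : ℕ) (hb : 2 ≤ b) (hu : u < b) :
    (Nat.digits b (b * k + u)).sum = u + (Nat.digits b k).sum := by
  rcases Nat.eq_zero_or_pos (b * k + u) with h | h
  · have hk : k = 0 := by
      rcases Nat.eq_zero_or_pos k with hk | hk
      · exact hk
      · exfalso; nlinarith
    have hu0 : u = 0 := by omega
    simp [hk, hu0]
  · rw [Nat.digits_def' (by omega : 1 < b) h]
    have h1 : (b * k + u) % b = u := by
      rw [Nat.mul_add_mod, Nat.mod_eq_of_lt hu]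
    have h2 : (b * k + u) / b = k := by
      rw [Nat.mul_add_div (by omega : 0 < b), Nat.div_eq_of_lt hu]; omega
    rw [h1, h2]; simp

/-- Step lemma: if `y % b ≠ b - 1` then the digit sum increases by 1 at `y+1`. -/
lemma dsum_step_simple (b y : ℕ) (hb : 2 ≤ b) (hy : y % b ≠ b - 1) :
    (Nat.digits b (y + 1)).sum = (Nat.digits b y).sum + 1 := by
  have hdm := Nat.div_add_mod y b
  have hlt : y % b < b := Nat.mod_lt _ (by omega)
  have hy2 : y + 1 = b * (y / b) + (y % b + 1) := by omega
  have hy1 : y = b * (y / b) + y % b := by omega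
  have h1 := dsum_eq b (y / b) (y % b + 1) hb (by omega)
  have h2 := dsum_eq b (y / b) (y % b) hb hlt
  rw [← hy2] at h1
  rw [← hy1] at h2
  omega

/-- Carry step lemma: if `x = b*k + (b-1)` with `b ∤ k + 1`, then
`dsum(x+1) + (b-1) = dsum(x) + 1`. -/
lemma dsum_step_carry (b k : ℕ) (hb : 2 ≤ b) (hk : ¬ b ∣ (k + 1)) :
    (Nat.digits b (b * k + (b - 1) + 1)).sum + (b - 1)
      = (Nat.digits b (b * k + (b - 1))).sum + 1 := by
  have h1 : b * k + (b - 1) + 1 = b * (k + 1) + 0 := by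
    have : b * (k + 1) = b * k + b := by ring
    omega
  have hkb : k % b ≠ b - 1 := by
    intro hmod
    apply hk
    have hdm := Nat.div_add_mod k b
    refine ⟨k / b + 1, ?_⟩
    have : b * (k / b + 1) = b * (k / b) + b := by ring
    omega
  rw [h1, dsum_eq b (k + 1) 0 hb (by omega), dsum_eq b k (b - 1) hb (by omega),
    dsum_step_simple b k hb hkb]
  omega

/-- if `t_{b,m}` is aperiodic (`m ∤ b - 1`) and `ℓ ≥ b` with `b ∤ ℓ`,
then no factor of length `ℓ` has index greater than `2`: no window of length
`2ℓ + 1` with period `ℓ` occurs in `t`. -/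
theorem genTM_index_le_two (b m ℓ : ℕ) (hb : 2 ≤ b) (hm : 1 ≤ m)
    (hap : ¬ m ∣ (b - 1)) (hℓb : b ≤ ℓ) (hnd : ¬ b ∣ ℓ) :
    ¬ ∃ i : ℕ, ∀ j : ℕ, j < ℓ + 1 → genTM b m (i + j) = genTM b m (i + j + ℓ) := by
  haveI : NeZero m := ⟨by omega⟩
  rintro ⟨i, h⟩
  -- choose k with i/b ≤ k ≤ i/b + 1 and b ∤ k+1
  obtain ⟨k, hk1, hk2, hk3⟩ : ∃ k, i / b ≤ k ∧ k ≤ i / b + 1 ∧ ¬ b ∣ (k + 1) := by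
    by_cases hd : b ∣ (i / b + 1)
    · refine ⟨i / b + 1, by omega, le_rfl, fun hd2 => ?_⟩
      have h3 := Nat.dvd_sub hd2 hd
      have h4 : i / b + 1 + 1 - (i / b + 1) = 1 := by omega
      rw [h4] at h3
      exact absurd (Nat.le_of_dvd one_pos h3) (by omega)
    · exact ⟨i / b, le_rfl, by omega, hd⟩
  set x := b * k + (b - 1) with hx
  -- location of x
  have hdm := Nat.div_add_mod i b
  have hltm : i % b < b := Nat.mod_lt _ (by omega)
  have hmul1 : b * (i / b) ≤ b * k := Nat.mul_le_mul_left b hk1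
  have hmul2 : b * k ≤ b * (i / b) + b := by
    have := Nat.mul_le_mul_left b hk2
    have heq : b * (i / b + 1) = b * (i / b) + b := by ring
    omega
  have hxge : i ≤ x := by omega
  have hxle : x ≤ i + 2 * b - 1 := by omega
  -- carry step at x, in ZMod m
  have hcx : (Nat.digits b (x + 1)).sum + (b - 1) = (Nat.digits b x).sum + 1 :=
    dsum_step_carry b k hb hk3
  have hcxz : ((Nat.digits b (x + 1)).sum : ZMod m) + ((b - 1 : ℕ) : ZMod m)
      = ((Nat.digits b x).sum : ZMod m) + 1 := by
    exact_mod_cast congrArg (fun n : ℕ => (n : ZMod m)) hcx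
  have key : ((b - 1 : ℕ) : ZMod m) = 0 := by
    by_cases hcase : x + 1 + ℓ ≤ i + 2 * ℓ
    · -- Case A: x, x+1 in the window [i, i+ℓ]
      have hj1 : x - i < ℓ + 1 := by omega
      have hj2 : x - i + 1 < ℓ + 1 := by omega
      have e1 : i + (x - i) = x := by omega
      have e2 : i + (x - i + 1) = x + 1 := by omega
      have e4 : x + 1 + ℓ = x + ℓ + 1 := by omega
      have hA1 := h (x - i) hj1
      have hA2 := h (x - i + 1) hj2
      rw [e1] at hA1
      rw [e2, e4] at hA2
      -- simple step at y = x + ℓ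
      have hymod : (x + ℓ) % b ≠ b - 1 := by
        intro hmod
        apply hnd
        have hdm2 := Nat.div_add_mod (x + ℓ) b
        have h5 : b ∣ b * ((x + ℓ) / b) - b * k :=
          Nat.dvd_sub (dvd_mul_right b _) (dvd_mul_right b _)
        have h6 : b * ((x + ℓ) / b) - b * k = ℓ := by omega
        rwa [h6] at h5
      have hsy := dsum_step_simple b (x + ℓ) hb hymod
      have hsyz : ((Nat.digits b (x + ℓ + 1)).sum : ZMod m)
          = ((Nat.digits b (x + ℓ)).sum : ZMod m) + 1 := by
        exact_mod_cast congrArg (fun n : ℕ => (n : ZMod m)) hsy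
      simp only [genTM] at hA1 hA2
      have hfin : ((Nat.digits b (x + ℓ)).sum : ZMod m) + 1 + ((b - 1 : ℕ) : ZMod m)
          = ((Nat.digits b (x + ℓ)).sum : ZMod m) + 1 := by
        calc ((Nat.digits b (x + ℓ)).sum : ZMod m) + 1 + ((b - 1 : ℕ) : ZMod m)
            = ((Nat.digits b (x + ℓ + 1)).sum : ZMod m) + ((b - 1 : ℕ) : ZMod m) := by
              rw [hsyz]
          _ = ((Nat.digits b (x + 1)).sum : ZMod m) + ((b - 1 : ℕ) : ZMod m) := by
              rw [hA2]
          _ = ((Nat.digits b x).sum : ZMod m) + 1 := hcxz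
          _ = ((Nat.digits b (x + ℓ)).sum : ZMod m) + 1 := by rw [hA1]
      exact add_eq_left.mp hfin
    · -- Case B: x - ℓ, x - ℓ + 1 in the window, with x = (x - ℓ) + ℓ
      have hxgeℓ : i + ℓ + 1 ≤ x + 1 := by omega
      set n := x - ℓ with hn
      have hnx : n + ℓ = x := by omega
      have hj1 : n - i < ℓ + 1 := by omega
      have hj2 : n - i + 1 < ℓ + 1 := by omega
      have e1 : i + (n - i) = n := by omega
      have e2 : i + (n - i + 1) = n + 1 := by omega
      have e3 : n + 1 + ℓ = x + 1 := by omega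
      have hB1 := h (n - i) hj1
      have hB2 := h (n - i + 1) hj2
      rw [e1, hnx] at hB1
      rw [e2, e3] at hB2
      -- simple step at n
      have hnmod : n % b ≠ b - 1 := by
        intro hmod
        apply hnd
        have hdm2 := Nat.div_add_mod n b
        have h5 : b ∣ b * k - b * (n / b) :=
          Nat.dvd_sub (dvd_mul_right b _) (dvd_mul_right b _)
        have h6 : b * k - b * (n / b) = ℓ := by omega
        rwa [h6] at h5
      have hsn := dsum_step_simple b n hb hnmod
      have hsnz : ((Nat.digits b (n + 1)).sum : ZMod m)
          = ((Nat.digits b n).sum : ZMod m) + 1 := by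
        exact_mod_cast congrArg (fun n : ℕ => (n : ZMod m)) hsn
      simp only [genTM] at hB1 hB2
      have hfin : ((Nat.digits b n).sum : ZMod m) + 1 + ((b - 1 : ℕ) : ZMod m)
          = ((Nat.digits b n).sum : ZMod m) + 1 := by
        calc ((Nat.digits b n).sum : ZMod m) + 1 + ((b - 1 : ℕ) : ZMod m)
            = ((Nat.digits b (n + 1)).sum : ZMod m) + ((b - 1 : ℕ) : ZMod m) := by
              rw [hsnz]
          _ = ((Nat.digits b (x + 1)).sum : ZMod m) + ((b - 1 : ℕ) : ZMod m) := by
              rw [hB2]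
          _ = ((Nat.digits b x).sum : ZMod m) + 1 := hcxz
          _ = ((Nat.digits b n).sum : ZMod m) + 1 := by rw [← hB1]
      exact add_eq_left.mp hfin
  exact hap ((ZMod.natCast_eq_zero_iff _ _).mp key)
end

section
/- Let b ≥ 2 and m ≥ 1 be integers, and let ℓ ≥ 1 with b ∣ ℓ. Suppose t has period ℓ on the window [i, i+L) for some L > ℓ, i.e., t(i+j) = t(i+j+ℓ) for all 0 ≤ j < L − ℓ. Then the occurrence can be synchronized with the blocks: t has period ℓ on the enlarged window [b·⌊i/b⌋, b·⌈(i+L)/b⌉), whose endpoints are multiples of b. In particular, some conjugate x of the repeated factor w (with |x| = ℓ) occurs to a power f ≥ L/ℓ at a synchronized occurrence (a position i' with b ∣ i' and b ∣ (i' + f·ℓ)). -/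
lemma sum_digits_mul_add (b k r : ℕ) (hb : 2 ≤ b) (hr : r < b) :
    (Nat.digits b (b * k + r)).sum = (Nat.digits b k).sum + r := by
  rcases Nat.eq_zero_or_pos (b * k + r) with h | h
  · have hk : k = 0 := by nlinarith
    have hr0 : r = 0 := by omega
    simp [hk, hr0]
  · rw [Nat.digits_def' (by omega : 1 < b) h]
    have h1 : (b * k + r) % b = r := by
      simp [Nat.mul_add_mod, Nat.mod_eq_of_lt hr]
    have h2 : (b * k + r) / b = k := by
      rw [Nat.mul_add_div (by omega : 0 < b), Nat.div_eq_of_lt hr]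
      omega
    rw [h1, h2, List.sum_cons]
    omega

lemma genTM_eq (b m n : ℕ) (hb : 2 ≤ b) :
    genTM b m n = ((Nat.digits b (n / b)).sum : ZMod m) + ((n % b : ℕ) : ZMod m) := by
  conv_lhs => rw [← Nat.div_add_mod n b]
  unfold genTM
  rw [sum_digits_mul_add b (n / b) (n % b) hb (Nat.mod_lt _ (by omega))]
  push_cast
  ring

lemma genTM_transfer (b m ℓ n n' : ℕ) (hb : 2 ≤ b) (hd : b ∣ ℓ)
    (hq : n / b = n' / b) (h : genTM b m n' = genTM b m (n' + ℓ)) :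
    genTM b m n = genTM b m (n + ℓ) := by
  obtain ⟨c, rfl⟩ := hd
  have hb0 : 0 < b := by omega
  have ed : ∀ x : ℕ, (x + b * c) / b = x / b + c := fun x =>
    Nat.add_mul_div_left x c hb0
  have em : ∀ x : ℕ, (x + b * c) % b = x % b := fun x =>
    Nat.add_mul_mod_self_left x b c
  rw [genTM_eq b m n' hb, genTM_eq b m (n' + b * c) hb, ed, em] at h
  have hs : ((Nat.digits b (n' / b)).sum : ZMod m)
      = ((Nat.digits b (n' / b + c)).sum : ZMod m) := add_right_cancel h
  rw [genTM_eq b m n hb, genTM_eq b m (n + b * c) hb, ed, em, hq, hs]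

/-- if `b ∣ ℓ` and `t` has period `ℓ` on `[i, i+L)` with `L > ℓ`, then
`t` has period `ℓ` on the enlarged window `[b·⌊i/b⌋, b·⌈(i+L)/b⌉)`, whose endpoints
are multiples of `b` (a synchronized occurrence of a conjugate of the repeated
factor, to a power `f ≥ L/ℓ`). -/
theorem genTM_synchronized (b m i ℓ L : ℕ) (hb : 2 ≤ b) (hm : 1 ≤ m)
    (hℓ : 1 ≤ ℓ) (hd : b ∣ ℓ) (hL : ℓ < L)
    (hper : ∀ j : ℕ, j < L - ℓ → genTM b m (i + j) = genTM b m (i + j + ℓ)) :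
    ∀ j : ℕ, j < b * ((i + L + b - 1) / b) - b * (i / b) - ℓ →
      genTM b m (b * (i / b) + j) = genTM b m (b * (i / b) + j + ℓ) := by
  intro j hj
  obtain ⟨c, hc⟩ := hd
  have hb0 : 0 < b := by omega
  -- abbreviations (purely notational below): n = b * (i / b) + j, k = n / b,
  -- T = (i + L + b - 1) / b
  have hi1 : b * (i / b) + i % b = i := Nat.div_add_mod i b
  have hi2 : i % b < b := Nat.mod_lt i hb0
  have hn1 : b * ((b * (i / b) + j) / b) + (b * (i / b) + j) % b = b * (i / b) + j :=
    Nat.div_add_mod _ b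
  have hn2 : (b * (i / b) + j) % b < b := Nat.mod_lt _ hb0
  -- n + ℓ < b * T
  have h1 : b * (i / b) + j + ℓ < b * ((i + L + b - 1) / b) := by omega
  -- b * k + ℓ < b * T
  have h2 : b * ((b * (i / b) + j) / b) + ℓ < b * ((i + L + b - 1) / b) := by omega
  -- divisibility bootstrapping: k + c < T
  have h3 : (b * (i / b) + j) / b + c < (i + L + b - 1) / b := by
    have e : b * ((b * (i / b) + j) / b + c) = b * ((b * (i / b) + j) / b) + ℓ := by
      rw [hc]; ring
    have hlt : b * ((b * (i / b) + j) / b + c) < b * ((i + L + b - 1) / b) := by omega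
    exact Nat.lt_of_mul_lt_mul_left hlt
  have h4 : b * ((b * (i / b) + j) / b) + ℓ + b ≤ b * ((i + L + b - 1) / b) := by
    have hle : b * ((b * (i / b) + j) / b + c + 1) ≤ b * ((i + L + b - 1) / b) :=
      Nat.mul_le_mul_left b (by omega)
    have e : b * ((b * (i / b) + j) / b + c + 1)
        = b * ((b * (i / b) + j) / b) + ℓ + b := by rw [hc]; ring
    omega
  have h5 : b * ((i + L + b - 1) / b) ≤ i + L + b - 1 := by
    rw [mul_comm]; exact Nat.div_mul_le_self _ _
  -- b * k + ℓ < i + L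
  have h6 : b * ((b * (i / b) + j) / b) + ℓ < i + L := by omega
  -- the witness n' = max (b * k) i
  have hA : i / b ≤ (b * (i / b) + j) / b := by
    have h0 : b * (i / b) ≤ b * (i / b) + j := by omega
    have := Nat.div_le_div_right (c := b) h0
    rwa [Nat.mul_div_cancel_left _ hb0] at this
  rcases le_or_gt i (b * ((b * (i / b) + j) / b)) with h | h
  · -- n' = b * k : synchronized position inside the window
    have hlt : b * ((b * (i / b) + j) / b) < i + L - ℓ := by omega
    have hp := hper (b * ((b * (i / b) + j) / b) - i) (by omega)
    rw [show i + (b * ((b * (i / b) + j) / b) - i) = b * ((b * (i / b) + j) / b) by omega]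
      at hp
    refine genTM_transfer b m ℓ _ _ hb ⟨c, hc⟩ ?_ hp
    rw [Nat.mul_div_cancel_left _ hb0]
  · -- n' = i
    have hp := hper 0 (by omega)
    rw [show i + 0 = i by omega] at hp
    refine genTM_transfer b m ℓ _ _ hb ⟨c, hc⟩ ?_ hp
    have hkle : (b * (i / b) + j) / b ≤ i / b := by
      have h' : b * ((b * (i / b) + j) / b) < b * (i / b + 1) := by
        have e : b * (i / b + 1) = b * (i / b) + b := by ring
        omega
      exact Nat.lt_succ_iff.mp (Nat.lt_of_mul_lt_mul_left h')
    omega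
end

section
/- Let b ≥ 2 and m ≥ 1 be integers with m ∤ (b − 1) (so t_{b,m} is aperiodic), and let ℓ ≥ 1 with b ∤ ℓ. Suppose t has period ℓ on the window [i, i+L), i.e., t(i+j) = t(i+j+ℓ) for all 0 ≤ j < L − ℓ. If b > m then m·L ≤ 2b·ℓ, and if b ≤ m then L ≤ 2ℓ. (Equivalently: the index of any factor of length ℓ with b ∤ ℓ is at most 2b/m when b > m, and at most 2 when b ≤ m.) -/
lemma sdig_rec {b : ℕ} (hb : 2 ≤ b) (n : ℕ) :
    (Nat.digits b n).sum = n % b + (Nat.digits b (n / b)).sum := by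
  rcases Nat.eq_zero_or_pos n with h | h
  · simp [h]
  · rw [Nat.digits_def' (by omega : 1 < b) h]; simp

lemma sdig_add {b : ℕ} (hb : 2 ≤ b) {n a : ℕ} (h : n % b + a < b) :
    (Nat.digits b (n + a)).sum = (Nat.digits b n).sum + a := by
  have hrep : n + a = b * (n / b) + (n % b + a) := by
    have := Nat.div_add_mod n b; omega
  have h1 : (n + a) % b = n % b + a := by
    rw [hrep, Nat.mul_add_mod, Nat.mod_eq_of_lt h]
  have h2 : (n + a) / b = n / b := by
    rw [hrep, Nat.mul_add_div (by omega), Nat.div_eq_of_lt h, Nat.add_zero]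
  rw [sdig_rec hb (n + a), sdig_rec hb n, h1, h2]; omega

lemma sdig_succ {b : ℕ} (hb : 2 ≤ b) {n : ℕ} (h : ¬ b ∣ (n + 1)) :
    (Nat.digits b (n + 1)).sum = (Nat.digits b n).sum + 1 := by
  apply sdig_add hb
  by_contra hc
  have h1 : n % b = b - 1 := by have := Nat.mod_lt n (show 0 < b by omega); omega
  have : n + 1 = b * (n / b + 1) := by
    rw [Nat.mul_add, Nat.mul_one]; have := Nat.div_add_mod n b; omega
  exact h ⟨_, this⟩

lemma sdig_mulb {b : ℕ} (hb : 2 ≤ b) {n : ℕ} (h1 : b ∣ n) (h2 : ¬ b * b ∣ n)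
    (h3 : 1 ≤ n) : (Nat.digits b n).sum + b = (Nat.digits b (n - 1)).sum + 2 := by
  obtain ⟨q, hq⟩ := h1
  have hq1 : 1 ≤ q := by nlinarith
  obtain ⟨q', rfl⟩ : ∃ q', q = q' + 1 := ⟨q - 1, by omega⟩
  have hbq : ¬ b ∣ (q' + 1) := fun ⟨c, hc⟩ => h2 ⟨c, by rw [hq, hc]; ring⟩
  have hqs : (Nat.digits b (q' + 1)).sum = (Nat.digits b q').sum + 1 := sdig_succ hb hbq
  have hn : (Nat.digits b n).sum = (Nat.digits b (q' + 1)).sum := by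
    rw [sdig_rec hb n, hq, Nat.mul_mod_right, Nat.mul_div_cancel_left _ (by omega : 0 < b),
      Nat.zero_add]
  have hrep : n - 1 = b * q' + (b - 1) := by
    rw [hq, Nat.mul_add, Nat.mul_one]; omega
  have hn1 : (Nat.digits b (n - 1)).sum = (b - 1) + (Nat.digits b q').sum := by
    rw [hrep, sdig_rec hb, Nat.mul_add_mod, Nat.mod_eq_of_lt (by omega),
      Nat.mul_add_div (by omega), Nat.div_eq_of_lt (by omega), Nat.add_zero]
  omega

/-- every multiple of `b` strictly inside the window is a multiple of `b²`. -/
lemma keyB (b m i ℓ L : ℕ) (hb : 2 ≤ b) (hm : 1 ≤ m)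
    (hap : ¬ m ∣ (b - 1)) (hℓ : 1 ≤ ℓ) (hnd : ¬ b ∣ ℓ)
    (hper : ∀ j : ℕ, j < L - ℓ → genTM b m (i + j) = genTM b m (i + j + ℓ))
    (hL : 2 * ℓ + 1 ≤ L) (n : ℕ) (hn1 : i + 1 ≤ n) (hn2 : n ≤ i + L - 1)
    (hdb : b ∣ n) : b * b ∣ n := by
  haveI : NeZero m := ⟨by omega⟩
  by_contra hnb
  have hf1 : (Nat.digits b n).sum + b = (Nat.digits b (n - 1)).sum + 2 :=
    sdig_mulb hb hdb hnb (by omega)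
  have c1 := congrArg (fun x : ℕ => (x : ZMod m)) hf1
  simp only [Nat.cast_add, Nat.cast_ofNat, Nat.cast_one] at c1
  have key : (b : ZMod m) = 1 := by
    rcases le_or_gt (n - i) (L - ℓ - 1) with hc | hc
    · -- n in the first part of the window
      have e1 := hper (n - i) (by omega)
      rw [show i + (n - i) = n by omega] at e1
      have e2 := hper (n - i - 1) (by omega)
      rw [show i + (n - i - 1) = n - 1 by omega, show n - 1 + ℓ = n + ℓ - 1 by omega] at e2
      have hb2 : ¬ b ∣ (n + ℓ) := fun hd => hnd (by simpa using Nat.dvd_sub hd hdb)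
      have f2 : (Nat.digits b (n + ℓ)).sum = (Nat.digits b (n + ℓ - 1)).sum + 1 := by
        have h := sdig_succ hb (n := n + ℓ - 1)
          (by rw [show n + ℓ - 1 + 1 = n + ℓ by omega]; exact hb2)
        rwa [show n + ℓ - 1 + 1 = n + ℓ by omega] at h
      have c2 := congrArg (fun x : ℕ => (x : ZMod m)) f2
      simp only [Nat.cast_add, Nat.cast_ofNat, Nat.cast_one] at c2
      simp only [genTM] at e1 e2
      linear_combination c1 - c2 - e1 + e2
    · -- n in the second part
      have hge : i + ℓ + 1 ≤ n := by omega
      have e1 := hper (n - ℓ - i) (by omega)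
      rw [show i + (n - ℓ - i) = n - ℓ by omega, show n - ℓ + ℓ = n by omega] at e1
      have e2 := hper (n - ℓ - i - 1) (by omega)
      rw [show i + (n - ℓ - i - 1) = n - ℓ - 1 by omega,
        show n - ℓ - 1 + ℓ = n - 1 by omega] at e2
      have hb2 : ¬ b ∣ (n - ℓ) := fun hd => hnd (by
        have := Nat.dvd_sub hdb hd
        rwa [show n - (n - ℓ) = ℓ by omega] at this)
      have f2 : (Nat.digits b (n - ℓ)).sum = (Nat.digits b (n - ℓ - 1)).sum + 1 := by
        have h := sdig_succ hb (n := n - ℓ - 1)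
          (by rw [show n - ℓ - 1 + 1 = n - ℓ by omega]; exact hb2)
        rwa [show n - ℓ - 1 + 1 = n - ℓ by omega] at h
      have c2 := congrArg (fun x : ℕ => (x : ZMod m)) f2
      simp only [Nat.cast_add, Nat.cast_ofNat, Nat.cast_one] at c2
      simp only [genTM] at e1 e2
      linear_combination c1 - c2 + e1 - e2
  have hb1 : ((b - 1 : ℕ) : ZMod m) = 0 := by
    rw [Nat.cast_sub (by omega : 1 ≤ b), key]; simp
  exact hap ((ZMod.natCast_eq_zero_iff _ _).mp hb1)

/-- if the window has length at least `2ℓ+1`, then `L ≤ 2b`. -/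
lemma keyL (b m i ℓ L : ℕ) (hb : 2 ≤ b) (hm : 1 ≤ m)
    (hap : ¬ m ∣ (b - 1)) (hℓ : 1 ≤ ℓ) (hnd : ¬ b ∣ ℓ)
    (hper : ∀ j : ℕ, j < L - ℓ → genTM b m (i + j) = genTM b m (i + j + ℓ))
    (hL : 2 * ℓ + 1 ≤ L) : L ≤ 2 * b := by
  by_contra h2b
  set M := b * (i / b + 1) with hM
  have hrep : M = b * (i / b) + b := by rw [hM, Nat.mul_add, Nat.mul_one]
  have hiM : i < M ∧ M ≤ i + b := by
    have := Nat.div_add_mod i b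
    have := Nat.mod_lt i (show 0 < b by omega)
    omega
  have d1 : b * b ∣ M := keyB b m i ℓ L hb hm hap hℓ hnd hper hL M
    (by omega) (by omega) ⟨_, rfl⟩
  have d2 : b * b ∣ M + b := keyB b m i ℓ L hb hm hap hℓ hnd hper hL (M + b)
    (by omega) (by omega) (dvd_add ⟨_, rfl⟩ dvd_rfl)
  have d3 : b * b ∣ b := by
    have := Nat.dvd_sub d2 d1
    rwa [show M + b - M = b by omega] at this
  have := Nat.le_of_dvd (by omega) d3
  nlinarith

/-- if `ℓ < b` and the window has length at least `2ℓ+1`, then `m ∣ ℓ`. -/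
lemma keyS (b m i ℓ L : ℕ) (hb : 2 ≤ b) (hm : 1 ≤ m)
    (hℓ : 1 ≤ ℓ)
    (hper : ∀ j : ℕ, j < L - ℓ → genTM b m (i + j) = genTM b m (i + j + ℓ))
    (hlb : ℓ < b) (hL : 2 * ℓ + 1 ≤ L) : m ∣ ℓ := by
  haveI : NeZero m := ⟨by omega⟩
  have hmod := Nat.mod_lt i (show 0 < b by omega)
  -- choose n in the window with n % b + ℓ < b
  obtain ⟨n, hn1, hn2⟩ : ∃ n, genTM b m n = genTM b m (n + ℓ) ∧ n % b + ℓ < b := by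
    rcases lt_or_ge (i % b + ℓ) b with h | h
    · exact ⟨i, by simpa using hper 0 (by omega), h⟩
    · refine ⟨i + (b - i % b), hper (b - i % b) (by omega), ?_⟩
      have : i + (b - i % b) = b * (i / b + 1) := by
        rw [Nat.mul_add, Nat.mul_one]; have := Nat.div_add_mod i b; omega
      rw [this, Nat.mul_mod_right]; omega
  have f := sdig_add hb hn2
  have c := congrArg (fun x : ℕ => (x : ZMod m)) f
  simp only [Nat.cast_add, Nat.cast_ofNat, Nat.cast_one] at c
  simp only [genTM] at hn1
  have : (ℓ : ZMod m) = 0 := by linear_combination - hn1 - c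
  exact (ZMod.natCast_eq_zero_iff _ _).mp this

/-- if `t_{b,m}` is aperiodic and `b ∤ ℓ`, then any window `[i, i+L)`
with period `ℓ` satisfies `m·L ≤ 2b·ℓ` when `b > m`, and `L ≤ 2ℓ` when `b ≤ m`. -/
theorem genTM_index_bound (b m i ℓ L : ℕ) (hb : 2 ≤ b) (hm : 1 ≤ m)
    (hap : ¬ m ∣ (b - 1)) (hℓ : 1 ≤ ℓ) (hnd : ¬ b ∣ ℓ) (hℓL : ℓ ≤ L)
    (hper : ∀ j : ℕ, j < L - ℓ → genTM b m (i + j) = genTM b m (i + j + ℓ)) :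
    (b > m → m * L ≤ 2 * b * ℓ) ∧ (b ≤ m → L ≤ 2 * ℓ) := by
  constructor
  · intro hbm
    rcases le_or_gt L (2 * ℓ) with h | h
    · calc m * L ≤ b * (2 * ℓ) := Nat.mul_le_mul hbm.le h
        _ = 2 * b * ℓ := by ring
    · have hL2b := keyL b m i ℓ L hb hm hap hℓ hnd hper (by omega)
      rcases lt_or_ge ℓ b with hlb | hlb
      · have hd := keyS b m i ℓ L hb hm hℓ hper hlb (by omega)
        have hml : m ≤ ℓ := Nat.le_of_dvd (by omega) hd
        calc m * L ≤ ℓ * (2 * b) := Nat.mul_le_mul hml hL2b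
          _ = 2 * b * ℓ := by ring
      · omega
  · intro hbm
    by_contra hc
    have h : 2 * ℓ + 1 ≤ L := by omega
    have hL2b := keyL b m i ℓ L hb hm hap hℓ hnd hper h
    rcases lt_or_ge ℓ b with hlb | hlb
    · have hd := keyS b m i ℓ L hb hm hℓ hper hlb h
      have := Nat.le_of_dvd (by omega) hd
      omega
    · omega
end

section
/- Let b ≥ 2 and m ≥ 1 be integers with b > m. Then the window of t_{b,m} of length 2b starting at position b^m − b (the two consecutive blocks starting at b^m − b and b^m) is σ-cyclic: t(b^m − b + j) = t(b^m − b) + j in ℤ/mℤ for all 0 ≤ j < 2b. Consequently t has period m on the window [b^m − b, b^m + b), so the factor of length m starting at position b^m − b occurs to the power 2b/m; in particular the critical exponent 2b/m is attained when m ∤ (b−1). -/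
lemma sum_digits_add_mul (b : ℕ) (hb : 2 ≤ b) (j c : ℕ) (hj : j < b) :
    (Nat.digits b (j + b * c)).sum = j + (Nat.digits b c).sum := by
  rcases Nat.eq_zero_or_pos (j + b * c) with h | h
  · have hj0 : j = 0 := by omega
    have hc : b * c = 0 := by omega
    have hc0 : c = 0 := by
      rcases Nat.mul_eq_zero.mp hc with h' | h' <;> omega
    simp [hj0, hc0]
  · rw [Nat.digits_def' (by omega : 1 < b) h]
    have h1 : (j + b * c) % b = j := by
      rw [Nat.add_mul_mod_self_left, Nat.mod_eq_of_lt hj]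
    have h2 : (j + b * c) / b = c := by
      rw [Nat.add_mul_div_left _ _ (by omega : 0 < b), Nat.div_eq_of_lt hj]
      omega
    rw [h1, h2]
    simp

lemma sum_digits_pow_sub_one (b : ℕ) (hb : 2 ≤ b) :
    ∀ m : ℕ, (Nat.digits b (b ^ m - 1)).sum = m * (b - 1) := by
  intro m
  induction m with
  | zero => simp
  | succ n ih =>
    have hx : 1 ≤ b ^ n := Nat.one_le_pow _ _ (by omega)
    have key : b ^ (n + 1) - 1 = (b - 1) + b * (b ^ n - 1) := by
      have h1 : b * (b ^ n - 1) = b * b ^ n - b := by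
        rw [Nat.mul_sub, Nat.mul_one]
      have h2 : b ^ (n + 1) = b * b ^ n := by ring
      have h3 : b ≤ b * b ^ n := Nat.le_mul_of_pos_right _ (by omega)
      omega
    rw [key, sum_digits_add_mul b hb _ _ (by omega), ih]
    ring_nf

lemma sum_digits_pow (b : ℕ) (hb : 2 ≤ b) :
    ∀ m : ℕ, (Nat.digits b (b ^ m)).sum = 1 := by
  intro m
  induction m with
  | zero =>
    rw [pow_zero]
    rw [Nat.digits_def' (by omega : 1 < b) (by omega)]
    simp [Nat.mod_eq_of_lt (by omega : 1 < b), Nat.div_eq_of_lt (by omega : 1 < b)]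
  | succ n ih =>
    have key : b ^ (n + 1) = 0 + b * b ^ n := by ring
    rw [key, sum_digits_add_mul b hb _ _ (by omega), ih]

lemma sum_digits_low (b m j : ℕ) (hb : 2 ≤ b) (hm : 1 ≤ m) (hj : j < b) :
    (Nat.digits b (b ^ m - b + j)).sum = j + (m - 1) * (b - 1) := by
  have hx : 1 ≤ b ^ (m - 1) := Nat.one_le_pow _ _ (by omega)
  have key : b ^ m - b + j = j + b * (b ^ (m - 1) - 1) := by
    have h1 : b * (b ^ (m - 1) - 1) = b * b ^ (m - 1) - b := by
      rw [Nat.mul_sub, Nat.mul_one]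
    have h2 : b ^ m = b * b ^ (m - 1) := by
      conv_lhs => rw [show m = 1 + (m - 1) by omega]
      ring
    have h3 : b ≤ b * b ^ (m - 1) := Nat.le_mul_of_pos_right _ (by omega)
    omega
  rw [key, sum_digits_add_mul b hb _ _ hj, sum_digits_pow_sub_one b hb]

lemma sum_digits_high (b m j : ℕ) (hb : 2 ≤ b) (hm : 1 ≤ m) (hj : j < b) :
    (Nat.digits b (b ^ m + j)).sum = j + 1 := by
  have key : b ^ m + j = j + b * b ^ (m - 1) := by
    have h2 : b ^ m = b * b ^ (m - 1) := by
      conv_lhs => rw [show m = 1 + (m - 1) by omega]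
      ring
    omega
  rw [key, sum_digits_add_mul b hb _ _ hj, sum_digits_pow b hb]

/-- for `b > m ≥ 1`, the window of length `2b` starting at `b^m - b`
(two consecutive blocks) is σ-cyclic; consequently `t` has period `m` on the window
`[b^m - b, b^m + b)`, so the factor of length `m` there occurs to the power `2b/m`. -/
theorem genTM_critical_power_attained (b m : ℕ) (hb : 2 ≤ b) (hm : 1 ≤ m)
    (hbm : b > m) :
    (∀ j : ℕ, j < 2 * b →
      genTM b m (b ^ m - b + j) = genTM b m (b ^ m - b) + (j : ZMod m)) ∧
    (∀ j : ℕ, j < 2 * b - m →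
      genTM b m (b ^ m - b + j) = genTM b m (b ^ m - b + j + m)) := by
  have hbpow : b ≤ b ^ m := Nat.le_self_pow (by omega) b
  have hbase : genTM b m (b ^ m - b) = (((m - 1) * (b - 1) : ℕ) : ZMod m) := by
    unfold genTM
    rw [show b ^ m - b = b ^ m - b + 0 by omega, sum_digits_low b m 0 hb hm (by omega)]
    norm_num
  have hcyc : ∀ j : ℕ, j < 2 * b →
      genTM b m (b ^ m - b + j) = genTM b m (b ^ m - b) + (j : ZMod m) := by
    intro j hj
    rcases lt_or_ge j b with hjb | hjb
    · unfold genTM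
      rw [sum_digits_low b m j hb hm hjb]
      rw [show ((Nat.digits b (b ^ m - b)).sum : ZMod m) = (((m - 1) * (b - 1) : ℕ) : ZMod m) by
        rw [show b ^ m - b = b ^ m - b + 0 by omega, sum_digits_low b m 0 hb hm (by omega)]
        norm_num]
      push_cast
      ring
    · set k := j - b with hk
      have hkb : k < b := by omega
      have hn : b ^ m - b + j = b ^ m + k := by omega
      rw [hn, hbase]
      unfold genTM
      rw [sum_digits_high b m k hb hm hkb]
      have hjk : (j : ZMod m) = (k : ZMod m) + (b : ZMod m) := by
        have : j = k + b := by omega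
        rw [this]; push_cast; ring
      rw [hjk]
      push_cast [Nat.cast_sub hm, Nat.cast_sub (show 1 ≤ b by omega)]
      rw [ZMod.natCast_self]
      ring
  refine ⟨hcyc, ?_⟩
  intro j hj
  have h1 := hcyc j (by omega)
  have h2 := hcyc (j + m) (by omega)
  rw [show b ^ m - b + j + m = b ^ m - b + (j + m) by omega, h2, h1]
  push_cast
  rw [ZMod.natCast_self]
  ring
end

section
/- Let b ≥ 2 and m ≥ 1 be integers with m ∤ (b − 1) and b > m. Suppose ℓ ≥ 1 with b ∤ ℓ, and suppose t has period ℓ on the window [i, i+L) where m·L = 2b·ℓ (so the factor of length ℓ at position i is a critical factor realizing the critical exponent 2b/m). Then ℓ = m, L = 2b, and b divides i; that is, the critical power w^{2b/m} consists exactly of two consecutive blocks of t. -/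
lemma genTM_block (b m k d : ℕ) (hb : 2 ≤ b) (hd : d < b) :
    genTM b m (b * k + d) = genTM b m k + (d : ZMod m) := by
  rcases Nat.eq_zero_or_pos (b * k + d) with h | h
  · have hk : b * k = 0 := by omega
    have hk' : k = 0 := by
      rcases Nat.mul_eq_zero.mp hk with h' | h' <;> omega
    have hd0 : d = 0 := by omega
    subst hk'; subst hd0; simp [genTM]
  · unfold genTM
    rw [Nat.digits_def' (by omega : 1 < b) h]
    have h1 : (b * k + d) % b = d := by
      rw [Nat.mul_add_mod, Nat.mod_eq_of_lt hd]
    have h2 : (b * k + d) / b = k := by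
      rw [Nat.mul_add_div (by omega : 0 < b), Nat.div_eq_of_lt hd, Nat.add_zero]
    rw [h1, h2, List.sum_cons]
    push_cast
    ring

/-- Step inside a block. -/
lemma genTM_succ_no_boundary (b m x : ℕ) (hb : 2 ≤ b) (hx : x % b ≠ b - 1) :
    genTM b m (x + 1) = genTM b m x + 1 := by
  have hlt : x % b < b := Nat.mod_lt _ (by omega)
  have hlt1 : x % b + 1 < b := by omega
  have hdec : b * (x / b) + x % b = x := Nat.div_add_mod x b
  have h1 : x + 1 = b * (x / b) + (x % b + 1) := by omega
  rw [h1, genTM_block b m _ _ hb hlt1]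
  conv_rhs => rw [← hdec, genTM_block b m _ _ hb hlt]
  push_cast
  ring

/-- Step across a block boundary. -/
lemma genTM_succ_boundary (b m x : ℕ) (hb : 2 ≤ b) (hx : x % b = b - 1) :
    genTM b m (x + 1) = genTM b m (x / b + 1) ∧
      genTM b m x = genTM b m (x / b) + (b : ZMod m) - 1 := by
  have hdec : b * (x / b) + x % b = x := Nat.div_add_mod x b
  have hmulsucc : b * (x / b + 1) = b * (x / b) + b := by
    rw [Nat.mul_add, Nat.mul_one]
  constructor
  · have h1 : x + 1 = b * (x / b + 1) + 0 := by omega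
    rw [h1, genTM_block b m _ _ hb (by omega)]
    simp
  · conv_lhs => rw [← hdec, hx, genTM_block b m _ _ hb (by omega : b - 1 < b)]
    have hc : ((b - 1 : ℕ) : ZMod m) = (b : ZMod m) - 1 := by
      have h2 : ((b - 1 : ℕ) : ZMod m) = ((b : ℕ) : ZMod m) - ((1 : ℕ) : ZMod m) :=
        Nat.cast_sub (by omega)
      simpa using h2
    rw [hc]
    ring

/-- If `t(K+1) = t(K) + b` then `K` must end in the digit `b-1` (else `m ∣ b-1`). -/
lemma genTM_succ_block_eq (b m K : ℕ) (hb : 2 ≤ b) (hm : 1 ≤ m) (hap : ¬ m ∣ (b - 1))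
    (h : genTM b m (K + 1) = genTM b m K + (b : ZMod m)) :
    K % b = b - 1 := by
  by_contra hK
  have hstep := genTM_succ_no_boundary b m K hb hK
  rw [h] at hstep
  have hb1 : ((b - 1 : ℕ) : ZMod m) = 0 := by
    have h2 : ((b - 1 : ℕ) : ZMod m) = ((b : ℕ) : ZMod m) - ((1 : ℕ) : ZMod m) :=
      Nat.cast_sub (by omega)
    rw [h2]
    push_cast
    linear_combination hstep
  haveI : NeZero m := ⟨by omega⟩
  exact hap ((ZMod.natCast_eq_zero_iff _ _).mp hb1)

/-- Telescoping along an interval with controlled boundaries. -/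
lemma genTM_chain (b m : ℕ) (hb : 2 ≤ b) (n : ℕ) :
    ∀ c : ℕ, (∀ x, n ≤ x → x < n + c → x % b = b - 1 →
      genTM b m (x / b + 1) = genTM b m (x / b) + (b : ZMod m)) →
    genTM b m (n + c) = genTM b m n + (c : ZMod m)
  | 0, _ => by simp
  | (c + 1), H => by
    have ih := genTM_chain b m hb n c (fun x h1 h2 h3 => H x h1 (by omega) h3)
    have hstep : genTM b m (n + c + 1) = genTM b m (n + c) + 1 := by
      by_cases hc : (n + c) % b = b - 1
      · have hK := H (n + c) (by omega) (by omega) hc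
        obtain ⟨h1, h2⟩ := genTM_succ_boundary b m (n + c) hb hc
        rw [h1, hK]
        linear_combination -h2
      · exact genTM_succ_no_boundary b m (n + c) hb hc
    have hnc : n + (c + 1) = n + c + 1 := by omega
    rw [hnc, hstep, ih]
    push_cast
    ring

/-- in the overlap case (`m ∤ b-1`, `b > m`), a critical power of a
factor of length `ℓ` with `b ∤ ℓ` (a window `[i, i+L)` with period `ℓ` and
`m·L = 2b·ℓ`) satisfies `ℓ = m`, `L = 2b` and `b ∣ i`: it consists of exactly two
consecutive blocks. -/
theorem genTM_critical_factor_blocks (b m i ℓ L : ℕ) (hb : 2 ≤ b) (hm : 1 ≤ m)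
    (hap : ¬ m ∣ (b - 1)) (hbm : b > m) (hℓ : 1 ≤ ℓ) (hnd : ¬ b ∣ ℓ)
    (hper : ∀ j : ℕ, j < L - ℓ → genTM b m (i + j) = genTM b m (i + j + ℓ))
    (hcrit : m * L = 2 * b * ℓ) :
    ℓ = m ∧ L = 2 * b ∧ b ∣ i := by
  set P := L - ℓ with hPdef
  have hr1 : 1 ≤ ℓ % b := by
    rcases Nat.eq_zero_or_pos (ℓ % b) with h | h
    · exact absurd (Nat.dvd_of_mod_eq_zero h) hnd
    · omega
  have hrb : ℓ % b < b := Nat.mod_lt _ (by omega)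
  have hℓL : ℓ < L := by
    by_contra h
    push_neg at h
    have h1 : m * L ≤ m * ℓ := Nat.mul_le_mul_left m h
    have h2 : (m + 1) * ℓ ≤ 2 * b * ℓ := Nat.mul_le_mul_right ℓ (by omega)
    nlinarith
  have hP : m * P = (2 * b - m) * ℓ := by
    have h1 : m * P = m * L - m * ℓ := by
      rw [hPdef, Nat.mul_sub]
    rw [h1, hcrit, ← Nat.sub_mul]
  have hPℓ : ℓ < P := by
    by_contra h
    push_neg at h
    have h1 : m * P ≤ m * ℓ := Nat.mul_le_mul_left m h
    have h2 : (m + 1) * ℓ ≤ (2 * b - m) * ℓ := Nat.mul_le_mul_right ℓ (by omega)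
    nlinarith
  -- the period, restated
  have hw : ∀ x, i ≤ x → x < i + P → genTM b m x = genTM b m (x + ℓ) := by
    intro x h1 h2
    have h3 := hper (x - i) (by omega)
    have h4 : i + (x - i) = x := by omega
    rw [h4] at h3
    exact h3
  -- mod-b shift across a boundary
  have hmodshift : ∀ x, x % b = b - 1 → (x + ℓ) % b = ℓ % b - 1 := by
    intro x h3
    have h4 : b - 1 + ℓ % b = b + (ℓ % b - 1) := by omega
    rw [Nat.add_mod, h3, h4, Nat.add_mod_left]
    exact Nat.mod_eq_of_lt (by omega)
  -- key lemma, copy 1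
  have keyA1 : ∀ x, i ≤ x → x + 2 ≤ i + P → x % b = b - 1 →
      genTM b m (x / b + 1) = genTM b m (x / b) + (b : ZMod m) := by
    intro x h1 h2 h3
    obtain ⟨e1, e2⟩ := genTM_succ_boundary b m x hb h3
    have hymod : (x + ℓ) % b = ℓ % b - 1 := hmodshift x h3
    have e3 : genTM b m (x + ℓ + 1) = genTM b m (x + ℓ) + 1 :=
      genTM_succ_no_boundary b m (x + ℓ) hb (by omega)
    have p1 : genTM b m x = genTM b m (x + ℓ) := hw x h1 (by omega)
    have p2 : genTM b m (x + 1) = genTM b m (x + 1 + ℓ) := hw (x + 1) (by omega) (by omega)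
    have hre : x + 1 + ℓ = x + ℓ + 1 := by omega
    rw [hre] at p2
    rw [← e1, p2, e3, ← p1, e2]
    ring
  have key1 : ∀ x, i ≤ x → x + 2 ≤ i + P → x % b = b - 1 → (x / b) % b = b - 1 :=
    fun x h1 h2 h3 => genTM_succ_block_eq b m (x / b) hb hm hap (keyA1 x h1 h2 h3)
  -- key lemma, copy 2
  have keyA2 : ∀ x, i ≤ x → x + 2 ≤ i + P → (x + ℓ) % b = b - 1 →
      genTM b m ((x + ℓ) / b + 1) = genTM b m ((x + ℓ) / b) + (b : ZMod m) := by
    intro x h1 h2 h3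
    have hxmod : x % b ≠ b - 1 := by
      intro hc
      have h4 := hmodshift x hc
      omega
    have e0 : genTM b m (x + 1) = genTM b m x + 1 := genTM_succ_no_boundary b m x hb hxmod
    obtain ⟨e1, e2⟩ := genTM_succ_boundary b m (x + ℓ) hb h3
    have p1 : genTM b m x = genTM b m (x + ℓ) := hw x h1 (by omega)
    have p2 : genTM b m (x + 1) = genTM b m (x + 1 + ℓ) := hw (x + 1) (by omega) (by omega)
    have hre : x + 1 + ℓ = x + ℓ + 1 := by omega
    rw [hre] at p2
    rw [← e1, ← p2, e0, p1, e2]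
    ring
  have key2 : ∀ x, i ≤ x → x + 2 ≤ i + P → (x + ℓ) % b = b - 1 →
      ((x + ℓ) / b) % b = b - 1 :=
    fun x h1 h2 h3 => genTM_succ_block_eq b m ((x + ℓ) / b) hb hm hap (keyA2 x h1 h2 h3)
  -- no two consecutive boundary block indices
  have hnot2 : ∀ k, k % b = b - 1 → (k + 1) % b = b - 1 → False := by
    intro k ha hb2
    rw [Nat.add_mod, ha] at hb2
    have h5 : 1 % b = 1 := Nat.mod_eq_of_lt (by omega)
    rw [h5] at hb2
    have h6 : b - 1 + 1 = b := by omega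
    rw [h6, Nat.mod_self] at hb2
    omega
  -- decompose i
  obtain ⟨k, e, hke, he⟩ : ∃ k e, i = b * k + e ∧ e < b :=
    ⟨i / b, i % b, (Nat.div_add_mod i b).symm, Nat.mod_lt _ (by omega)⟩
  have hbk1 : b * (k + 1) = b * k + b := by rw [Nat.mul_add, Nat.mul_one]
  have hx1div : ∀ d, d < b → (b * k + d) / b = k := fun d hd => by
    rw [Nat.mul_add_div (by omega : 0 < b), Nat.div_eq_of_lt hd, Nat.add_zero]
  have hx1mod : ∀ d, d < b → (b * k + d) % b = d := fun d hd => by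
    rw [Nat.mul_add_mod, Nat.mod_eq_of_lt hd]
  have hx2div : ∀ d, d < b → (b * (k + 1) + d) / b = k + 1 := fun d hd => by
    rw [Nat.mul_add_div (by omega : 0 < b), Nat.div_eq_of_lt hd, Nat.add_zero]
  have hx2mod : ∀ d, d < b → (b * (k + 1) + d) % b = d := fun d hd => by
    rw [Nat.mul_add_mod, Nat.mod_eq_of_lt hd]
  -- the window has length at most 2b
  have hP2b : P ≤ 2 * b := by
    by_contra hc
    push_neg at hc
    have k1 := key1 (b * k + (b - 1)) (by omega) (by omega) (hx1mod _ (by omega))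
    rw [hx1div _ (by omega)] at k1
    have k2 := key1 (b * (k + 1) + (b - 1)) (by omega) (by omega) (hx2mod _ (by omega))
    rw [hx2div _ (by omega)] at k2
    exact hnot2 k k1 k2
  -- m divides ℓ
  have hchain := genTM_chain b m hb i ℓ (fun x h1 h2 h3 => keyA1 x h1 (by omega) h3)
  have hper0 := hw i (le_refl i) (by omega)
  rw [hchain] at hper0
  have hl0 : (ℓ : ZMod m) = 0 := by linear_combination -hper0
  haveI : NeZero m := ⟨by omega⟩
  have hml : m ∣ ℓ := (ZMod.natCast_eq_zero_iff _ _).mp hl0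
  obtain ⟨u, hu⟩ := hml
  have hu1 : 1 ≤ u := by
    by_contra h
    push_neg at h
    have h0 : u = 0 := by omega
    rw [h0, Nat.mul_zero] at hu
    omega
  have hPu : P = (2 * b - m) * u := by
    apply Nat.eq_of_mul_eq_mul_left (show 0 < m by omega)
    rw [hP, hu]; ring
  have hu2 : u = 1 := by
    by_contra hc
    have h2 : 2 ≤ u := by omega
    have h3 : (2 * b - m) * 2 ≤ (2 * b - m) * u := Nat.mul_le_mul_left _ h2
    rw [← hPu] at h3
    omega
  have hℓm : ℓ = m := by rw [hu, hu2, Nat.mul_one]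
  have hL : L = 2 * b := by
    apply Nat.eq_of_mul_eq_mul_left (show 0 < m by omega)
    rw [hcrit, hℓm]; ring
  have hPv : P = 2 * b - m := by omega
  refine ⟨hℓm, hL, ?_⟩
  -- b divides i
  by_contra hbi
  have he1 : 1 ≤ e := by
    rcases Nat.eq_zero_or_pos e with h | h
    · exact absurd ⟨k, by omega⟩ hbi
    · exact h
  have k1 := key1 (b * k + (b - 1)) (by omega) (by omega) (hx1mod _ (by omega))
  rw [hx1div _ (by omega)] at k1
  have hx2 : b * (k + 1) + (b - 1 - m) + ℓ = b * (k + 1) + (b - 1) := by omega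
  have k2 := key2 (b * (k + 1) + (b - 1 - m)) (by omega) (by omega)
    (by rw [hx2]; exact hx2mod _ (by omega))
  rw [hx2, hx2div _ (by omega)] at k2
  exact hnot2 k k1 k2
end

section
/- Let b and m be integers with 2 ≤ b ≤ m. Suppose ℓ > b with b ∤ ℓ, and suppose t_{b,m} has period ℓ on the window [i, i+2ℓ), i.e., t(i+j) = t(i+j+ℓ) for all 0 ≤ j < ℓ (a square of a factor of length ℓ occurs). Then b = 2, m = 2 and ℓ = 3. In other words, the classical Thue–Morse word is the only generalized Thue–Morse word containing a critical factor of length ℓ > b with b ∤ ℓ, and such a factor has length 3. -/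
/-- The `b`-adic valuation, defined by simple recursion. -/
def vTM (b : ℕ) : ℕ → ℕ := fun n =>
  if h : 2 ≤ b ∧ b ∣ n ∧ n ≠ 0 then vTM b (n / b) + 1 else 0
  decreasing_by
    exact Nat.div_lt_self (Nat.pos_of_ne_zero h.2.2) (by omega)

lemma vTM_eq_zero {b n : ℕ} (h : ¬ b ∣ n) : vTM b n = 0 := by
  rw [vTM]; simp [h]

lemma vTM_mul {b q : ℕ} (hb : 2 ≤ b) (hq : q ≠ 0) : vTM b (b * q) = vTM b q + 1 := by
  rw [vTM]
  have : 2 ≤ b ∧ b ∣ b * q ∧ b * q ≠ 0 :=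
    ⟨hb, Dvd.intro q rfl, by positivity⟩
  rw [dif_pos this, Nat.mul_div_cancel_left _ (by omega)]

lemma vTM_pos {b n : ℕ} (hb : 2 ≤ b) (hn : n ≠ 0) (h : b ∣ n) : 1 ≤ vTM b n := by
  rw [vTM, dif_pos ⟨hb, h, hn⟩]; omega

lemma pow_vTM_dvd {b : ℕ} (hb : 2 ≤ b) : ∀ n : ℕ, b ^ (vTM b n) ∣ n := by
  intro n
  induction n using Nat.strong_induction_on with
  | _ n ih =>
    by_cases h : b ∣ n ∧ n ≠ 0
    · obtain ⟨q, rfl⟩ := h.1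
      have hq : q ≠ 0 := by rintro rfl; simp at h
      rw [vTM_mul hb hq, pow_succ]
      have := ih q (by nlinarith [Nat.pos_of_ne_zero hq])
      calc b ^ vTM b q * b ∣ q * b := mul_dvd_mul_right this b
        _ = b * q := mul_comm _ _
    · rw [vTM, dif_neg (by tauto)]; simp

/-- Key digit-sum identity: `s_b(n) + (b-1)·v_b(n) = s_b(n-1) + 1` for `n ≥ 1`. -/
lemma sum_digits_identity {b : ℕ} (hb : 2 ≤ b) :
    ∀ n : ℕ, n ≠ 0 →
      (Nat.digits b n).sum + (b - 1) * vTM b n = (Nat.digits b (n - 1)).sum + 1 := by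
  intro n
  induction n using Nat.strong_induction_on with
  | _ n ih =>
    intro hn
    by_cases h : b ∣ n
    · -- n = b * q, q ≥ 1
      obtain ⟨q, rfl⟩ := h
      have hq : q ≠ 0 := by rintro rfl; simp at hn
      have hq1 : 1 ≤ q := Nat.one_le_iff_ne_zero.mpr hq
      have hlt : q < b * q := by nlinarith
      have IH := ih q hlt hq
      have hd1 : Nat.digits b (b * q) = 0 :: Nat.digits b q := by
        rw [Nat.digits_def' (by omega : 1 < b) (by positivity)]
        rw [Nat.mul_mod_right, Nat.mul_div_cancel_left _ (by omega)]
      have hkey : b * (q - 1) + b * 1 = b * q := by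
        rw [← Nat.mul_add]; congr 1; omega
      have hsub : b * q - 1 = b * (q - 1) + (b - 1) := by omega
      have hd2 : Nat.digits b (b * q - 1) = (b - 1) :: Nat.digits b (q - 1) := by
        rw [hsub, Nat.digits_def' (by omega : 1 < b) (by omega)]
        rw [Nat.mul_add_mod, Nat.mod_eq_of_lt (by omega)]
        rw [Nat.mul_add_div (by omega), Nat.div_eq_of_lt (by omega), Nat.add_zero]
      have hexp : (b - 1) * (vTM b q + 1) = (b - 1) * vTM b q + (b - 1) := by
        ring
      rw [hd1, hd2, vTM_mul hb hq, hexp]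
      simp only [List.sum_cons]
      omega
    · -- b ∤ n
      rw [vTM_eq_zero h, mul_zero, add_zero]
      have hd1 : Nat.digits b n = n % b :: Nat.digits b (n / b) := by
        rw [Nat.digits_def' (by omega : 1 < b) (Nat.pos_of_ne_zero hn)]
      have hmod : n % b ≠ 0 := fun hc => h (Nat.dvd_of_mod_eq_zero hc)
      have hmlt : n % b < b := Nat.mod_lt n (by omega)
      by_cases h1 : n = 1
      · subst h1
        rw [hd1]
        rw [Nat.mod_eq_of_lt (by omega), Nat.div_eq_of_lt (by omega)]
        simp
      · have hn2 : 2 ≤ n := by omega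
        have hrw : n - 1 = b * (n / b) + (n % b - 1) := by
          have := Nat.div_add_mod n b
          omega
        have hd2 : Nat.digits b (n - 1) = (n % b - 1) :: Nat.digits b (n / b) := by
          by_cases hdiv : n / b = 0
          · have hnb : n < b := by
              have := Nat.div_add_mod n b; rw [hdiv] at this; omega
            rw [Nat.digits_def' (by omega : 1 < b) (by omega)]
            rw [Nat.mod_eq_of_lt (by omega), Nat.div_eq_of_lt (by omega)]
            rw [Nat.mod_eq_of_lt hnb] at *
            rw [hdiv]
          · rw [hrw, Nat.digits_def' (by omega : 1 < b) (by positivity)]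
            rw [Nat.mul_add_mod, Nat.mod_eq_of_lt (by omega)]
            have hz : (n % b - 1) / b = 0 := Nat.div_eq_of_lt (by omega)
            rw [Nat.mul_add_div (by omega), hz, Nat.add_zero]
        rw [hd1, hd2]
        simp only [List.sum_cons]
        omega

/-- for `2 ≤ b ≤ m`, if a square of a factor of length `ℓ > b` with
`b ∤ ℓ` occurs in `t_{b,m}`, then `b = 2`, `m = 2` and `ℓ = 3`: only the classical
Thue–Morse word contains such a critical factor, of length `3`. -/
theorem genTM_only_TM (b m i ℓ : ℕ) (hb : 2 ≤ b) (hbm : b ≤ m)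
    (hℓb : b < ℓ) (hnd : ¬ b ∣ ℓ)
    (hsq : ∀ j : ℕ, j < ℓ → genTM b m (i + j) = genTM b m (i + j + ℓ)) :
    b = 2 ∧ m = 2 ∧ ℓ = 3 := by
  have hm : 2 ≤ m := le_trans hb hbm
  haveI : NeZero m := ⟨by omega⟩
  -- step difference in ZMod m
  have hstep : ∀ n : ℕ, n ≠ 0 →
      genTM b m n + (((b - 1) * vTM b n : ℕ) : ZMod m) = genTM b m (n - 1) + 1 := by
    intro n hn
    have h0 := sum_digits_identity hb n hn
    have h1 : (((Nat.digits b n).sum + (b - 1) * vTM b n : ℕ) : ZMod m)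
        = (((Nat.digits b (n - 1)).sum + 1 : ℕ) : ZMod m) := by rw [h0]
    push_cast at h1
    simpa [genTM] using h1
  -- key lemma: valuations match modulo m across the window
  have hKL : ∀ j : ℕ, 1 ≤ j → j < ℓ →
      (((b - 1) * vTM b (i + j) : ℕ) : ZMod m)
        = (((b - 1) * vTM b (i + j + ℓ) : ℕ) : ZMod m) := by
    intro j hj1 hjℓ
    have h1 := hstep (i + j) (by omega)
    have h2 := hstep (i + j + ℓ) (by omega)
    have e1 : i + j - 1 = i + (j - 1) := by omega
    have e2 : i + j + ℓ - 1 = i + (j - 1) + ℓ := by omega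
    rw [e1] at h1; rw [e2] at h2
    have hA := hsq j hjℓ
    have hB := hsq (j - 1) (by omega)
    rw [hA, hB] at h1
    exact add_left_cancel (h1.trans h2.symm)
  -- divisibility consequence: if `b ∣` one side only, `b² ∣` it
  have hsq2 : ∀ j : ℕ, 1 ≤ j → j < ℓ →
      (b ∣ i + j → b ^ 2 ∣ i + j) ∧ (b ∣ i + j + ℓ → b ^ 2 ∣ i + j + ℓ) := by
    intro j hj1 hjℓ
    have key : ∀ x y : ℕ, x ≠ 0 → b ∣ x → ¬ b ∣ y →
        (((b - 1) * vTM b x : ℕ) : ZMod m) = (((b - 1) * vTM b y : ℕ) : ZMod m) →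
        b ^ 2 ∣ x := by
      intro x y hx hdx hdy heq
      rw [vTM_eq_zero hdy, mul_zero, Nat.cast_zero] at heq
      have hdvd : m ∣ (b - 1) * vTM b x := by
        rwa [ZMod.natCast_eq_zero_iff] at heq
      have hv1 : 1 ≤ vTM b x := vTM_pos hb hx hdx
      have hv2 : 2 ≤ vTM b x := by
        by_contra hc
        have he1 : vTM b x = 1 := by omega
        rw [he1, mul_one] at hdvd
        have := Nat.le_of_dvd (by omega) hdvd
        omega
      calc b ^ 2 ∣ b ^ (vTM b x) := pow_dvd_pow b hv2
        _ ∣ x := pow_vTM_dvd hb x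
    constructor
    · intro hdj
      have hnd2 : ¬ b ∣ i + j + ℓ := fun hc => hnd (by
        have := Nat.dvd_sub hc hdj
        simpa using this)
      exact key _ _ (by omega) hdj hnd2 (hKL j hj1 hjℓ)
    · intro hdj
      have hnd2 : ¬ b ∣ i + j := fun hc => hnd (by
        have := Nat.dvd_sub hdj hc
        simpa using this)
      exact key _ _ (by omega) hdj hnd2 (hKL j hj1 hjℓ).symm
  -- find the first multiple of b after i
  set j₀ : ℕ := b - i % b with hj₀
  have hj₀1 : 1 ≤ j₀ := by
    have := Nat.mod_lt i (show 0 < b by omega)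
    omega
  have hj₀b : j₀ ≤ b := by omega
  have hdj₀ : b ∣ i + j₀ := by
    have he : i + j₀ = b * (i / b) + b := by
      have := Nat.div_add_mod i b
      omega
    rw [he]
    exact Dvd.dvd.add (Dvd.intro _ rfl) dvd_rfl
  have hN : b ^ 2 ∣ i + j₀ := (hsq2 j₀ hj₀1 (by omega)).1 hdj₀
  -- the next multiple i + j₀ + b must be i + ℓ
  have hℓeq : ℓ = j₀ + b := by
    by_contra hc
    have hd : b ∣ i + j₀ + b := Dvd.dvd.add hdj₀ dvd_rfl
    have hN' : b ^ 2 ∣ i + j₀ + b := by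
      rcases lt_trichotomy (j₀ + b) ℓ with h | h | h
      · have hd' : b ∣ i + (j₀ + b) := by rwa [← add_assoc]
        have := (hsq2 (j₀ + b) (by omega) h).1 hd'
        rwa [← add_assoc] at this
      · omega
      · have hj' : 1 ≤ j₀ + b - ℓ := by omega
        have hj'2 : j₀ + b - ℓ < ℓ := by omega
        have he : i + (j₀ + b - ℓ) + ℓ = i + j₀ + b := by omega
        have hd' : b ∣ i + (j₀ + b - ℓ) + ℓ := by rwa [he]
        have := (hsq2 (j₀ + b - ℓ) hj' hj'2).2 hd'
        rwa [he] at this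
    have hsub := Nat.dvd_sub hN' hN
    have he : i + j₀ + b - (i + j₀) = b := by omega
    rw [he] at hsub
    have := Nat.le_of_dvd (by omega) hsub
    nlinarith
  -- so b ∣ i + ℓ; the multiple i + ℓ + b forces b = 2
  have hdiℓ : b ∣ i + ℓ := by
    rw [hℓeq, ← add_assoc]
    exact Dvd.dvd.add hdj₀ dvd_rfl
  have hN'' : b ^ 2 ∣ i + b + ℓ := by
    refine (hsq2 b (by omega) hℓb).2 ?_
    have he : i + b + ℓ = (i + ℓ) + b := by omega
    rw [he]
    exact Dvd.dvd.add hdiℓ dvd_rfl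
  have hb2 : b = 2 := by
    have hsub := Nat.dvd_sub hN'' hN
    have he : (i + b + ℓ) - (i + j₀) = 2 * b := by omega
    rw [he] at hsub
    have := Nat.le_of_dvd (by omega) hsub
    nlinarith
  subst hb2
  have hℓ3 : ℓ = 3 := by
    have h2 : ¬ 2 ∣ ℓ := hnd
    omega
  subst hℓ3
  have hj₀eq : j₀ = 1 := by omega
  rw [hj₀eq] at hN
  -- now m = 2 : use exact valuations
  refine ⟨rfl, ?_, rfl⟩
  have hodd : ¬ 2 ∣ i := by
    intro hc
    have : 2 ∣ i + 1 := dvd_trans (by norm_num) hN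
    omega
  have hm1 : m ∣ vTM 2 (i + 1) := by
    have h0 := hKL 1 (by norm_num) (by norm_num)
    have hnd2 : ¬ 2 ∣ (i + 1 + 3) := by omega
    rw [vTM_eq_zero hnd2] at h0
    norm_num at h0
    rwa [ZMod.natCast_eq_zero_iff] at h0
  have hm5 : m ∣ vTM 2 (i + 2 + 3) := by
    have h0 := hKL 2 (by norm_num) (by norm_num)
    have h2 : ¬ 2 ∣ (i + 2) := by omega
    rw [vTM_eq_zero h2] at h0
    norm_num at h0
    rw [eq_comm] at h0
    rwa [ZMod.natCast_eq_zero_iff] at h0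
  -- one of i+1, i+5 is `4·odd`, with valuation exactly 2
  have hv4 : ∀ w : ℕ, ¬ 2 ∣ w → vTM 2 (4 * w) = 2 := by
    intro w hw
    have hw0 : w ≠ 0 := by rintro rfl; simp at hw
    have he : (4 : ℕ) * w = 2 * (2 * w) := by ring
    rw [he, vTM_mul (le_refl 2) (by omega), vTM_mul (le_refl 2) hw0,
      vTM_eq_zero hw]
  obtain ⟨u, hu⟩ : 4 ∣ i + 1 := hN
  by_cases hue : 2 ∣ u
  · -- then i+5 = 4(u+1) with u+1 odd
    have he : i + 2 + 3 = 4 * (u + 1) := by omega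
    rw [he, hv4 (u + 1) (by omega)] at hm5
    have := Nat.le_of_dvd (by norm_num) hm5
    omega
  · rw [hu, hv4 u hue] at hm1
    have := Nat.le_of_dvd (by norm_num) hm1
    omega
end

section
/- Let b ≥ 2 and m ≥ 2 be integers with m ∤ (b − 1) and b > m. Then for every p ∈ ℕ, the word t_{b,m} has period m on the window [p, p + 2b) (an occurrence of the critical power w^{2b/m} with |w| = m) if and only if p = k·b^q − b for some integers k ≥ 1 and q ≥ 1 with b ∤ k and m ∣ q(b − 1). That is, the set of occurrences of critical powers of critical factors of length m is A = { k·b^q − b : k ≥ 1, b ∤ k, q ≥ 1, m ∣ q(b−1) }. -/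
lemma digitsSum_mul_add (b a d : ℕ) (hb : 2 ≤ b) (hd : d < b) :
    (Nat.digits b (a * b + d)).sum = (Nat.digits b a).sum + d := by
  rcases Nat.eq_zero_or_pos (a * b + d) with h0 | hpos
  · have hd0 : d = 0 := by omega
    have hab : a * b = 0 := by omega
    have ha : a = 0 := by
      rcases Nat.mul_eq_zero.mp hab with h | h
      · exact h
      · omega
    subst hd0; subst ha; simp
  · rw [Nat.digits_def' (by omega : 1 < b) hpos]
    have h1 : (a * b + d) % b = d := by
      rw [add_comm, Nat.add_mul_mod_self_right, Nat.mod_eq_of_lt hd]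
    have h2 : (a * b + d) / b = a := by
      rw [add_comm, Nat.add_mul_div_right _ _ (by omega : 0 < b),
        Nat.div_eq_of_lt hd, zero_add]
    rw [h1, h2, List.sum_cons]
    omega

lemma carry_exists (b : ℕ) (hb : 2 ≤ b) (a : ℕ) :
    ∃ v k : ℕ, ¬ b ∣ k ∧ a + 1 = k * b ^ v ∧
      (Nat.digits b (a + 1)).sum + v * (b - 1) = (Nat.digits b a).sum + 1 := by
  induction a using Nat.strong_induction_on with
  | _ a ih =>
    have hmod : a % b < b := Nat.mod_lt _ (by omega)
    have hq : (a / b) * b + a % b = a := by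
      rw [mul_comm]; exact Nat.div_add_mod a b
    rcases Nat.lt_or_ge (a % b) (b - 1) with h | h
    · refine ⟨0, a + 1, ?_, by ring, ?_⟩
      · intro hdvd
        have h0 : (a + 1) % b = 0 := Nat.mod_eq_zero_of_dvd hdvd
        have h1 : (a + 1) % b = (a % b + 1 % b) % b := Nat.add_mod a 1 b
        rw [Nat.mod_eq_of_lt (show 1 < b by omega), Nat.mod_eq_of_lt (show a % b + 1 < b by omega)] at h1
        omega
      · have hsa : (Nat.digits b a).sum = (Nat.digits b (a / b)).sum + a % b := by
          conv_lhs => rw [← hq]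
          exact digitsSum_mul_add b (a / b) (a % b) hb hmod
        have hsa1 : (Nat.digits b (a + 1)).sum = (Nat.digits b (a / b)).sum + (a % b + 1) := by
          have he : a + 1 = (a / b) * b + (a % b + 1) := by omega
          rw [he]
          exact digitsSum_mul_add b (a / b) (a % b + 1) hb (by omega)
        omega
    · have hab : a % b = b - 1 := by omega
      have hapos : 0 < a := by omega
      have hlt : a / b < a := Nat.div_lt_self hapos (by omega)
      obtain ⟨v, k, hk, hck, hE⟩ := ih (a / b) hlt
      refine ⟨v + 1, k, hk, ?_, ?_⟩
      · have h1 : a + 1 = (a / b + 1) * b := by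
          rw [add_mul, one_mul]; omega
        rw [h1, hck, pow_succ, mul_assoc]
      · have hs1 : (Nat.digits b (a + 1)).sum = (Nat.digits b (a / b + 1)).sum := by
          have h1 : a + 1 = (a / b + 1) * b + 0 := by rw [add_mul, one_mul]; omega
          rw [h1, digitsSum_mul_add b _ 0 hb (by omega)]
          omega
        have hs0 : (Nat.digits b a).sum = (Nat.digits b (a / b)).sum + (b - 1) := by
          conv_lhs => rw [← hq, hab]
          exact digitsSum_mul_add b (a / b) (b - 1) hb (by omega)
        have hvb : (v + 1) * (b - 1) = v * (b - 1) + (b - 1) := by ring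
        omega

lemma pow_val_unique (b : ℕ) (hb : 2 ≤ b) :
    ∀ v v' k k' : ℕ, ¬ b ∣ k → ¬ b ∣ k' → k * b ^ v = k' * b ^ v' → v = v' := by
  intro v
  induction v with
  | zero =>
    intro v' k k' hk hk' he
    cases v' with
    | zero => rfl
    | succ w =>
      exfalso; apply hk
      rw [pow_zero, mul_one, pow_succ, ← mul_assoc] at he
      exact Dvd.intro_left _ he.symm
  | succ w ihw =>
    intro v' k k' hk hk' he
    cases v' with
    | zero =>
      exfalso; apply hk'
      rw [pow_zero, mul_one, pow_succ, ← mul_assoc] at he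
      exact Dvd.intro_left _ he
    | succ w' =>
      rw [pow_succ, ← mul_assoc, pow_succ, ← mul_assoc] at he
      have := Nat.eq_of_mul_eq_mul_right (show 0 < b by omega) he
      rw [ihw w' k k' hk hk' this]

lemma genTM_easy (b m a d : ℕ) (hb : 2 ≤ b) (hd : d + m < b) :
    genTM b m (a * b + d + m) = genTM b m (a * b + d) := by
  unfold genTM
  rw [add_assoc, digitsSum_mul_add b a (d + m) hb hd,
    digitsSum_mul_add b a d hb (by omega)]
  push_cast
  rw [ZMod.natCast_self]
  ring

lemma genTM_dangerous (b m a d v : ℕ) (hb : 2 ≤ b) (hm : 2 ≤ m) (hbm : m < b)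
    (hd1 : b ≤ d + m) (hd2 : d < b)
    (hE : (Nat.digits b (a + 1)).sum + v * (b - 1) = (Nat.digits b a).sum + 1) :
    genTM b m (a * b + d + m) = genTM b m (a * b + d) ↔ m ∣ (v + 1) * (b - 1) := by
  have h1 : a * b + d + m = (a + 1) * b + (d + m - b) := by rw [add_mul, one_mul]; omega
  unfold genTM
  rw [h1, digitsSum_mul_add b (a + 1) (d + m - b) hb (by omega),
    digitsSum_mul_add b a d hb hd2,
    ← ZMod.natCast_eq_zero_iff]
  have hm0 : ((m : ℕ) : ZMod m) = 0 := ZMod.natCast_self m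
  have hE' : ((Nat.digits b (a + 1)).sum : ZMod m) + (v : ZMod m) * ((b : ZMod m) - 1)
      = ((Nat.digits b a).sum : ZMod m) + 1 := by
    have h := congrArg (fun x : ℕ => (x : ZMod m)) hE
    simp only [Nat.cast_add, Nat.cast_mul, Nat.cast_sub (show 1 ≤ b by omega),
      Nat.cast_one] at h
    exact h
  rw [Nat.cast_add, Nat.cast_sub hd1]
  simp only [Nat.cast_add, Nat.cast_mul, Nat.cast_sub (show 1 ≤ b by omega), Nat.cast_one]
  constructor
  · intro h
    linear_combination hE' - h + hm0
  · intro h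
    linear_combination hE' - h + hm0

/-- in the overlap case (`m ∤ b-1`, `b > m ≥ 2`), the occurrences of
critical powers (windows of length `2b` with period `m`) are exactly the positions
`k·b^q − b` with `k ≥ 1`, `b ∤ k`, `q ≥ 1` and `m ∣ q(b−1)`. -/
theorem genTM_overlap_occurrences (b m : ℕ) (hb : 2 ≤ b) (hm : 2 ≤ m)
    (hap : ¬ m ∣ (b - 1)) (hbm : b > m) :
    ∀ p : ℕ,
      (∀ j : ℕ, j < 2 * b - m → genTM b m (p + j) = genTM b m (p + j + m)) ↔
      ∃ k q : ℕ, 1 ≤ k ∧ 1 ≤ q ∧ ¬ b ∣ k ∧ m ∣ q * (b - 1) ∧ p = k * b ^ q - b := by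
  intro p
  constructor
  · intro H
    have hpe : p % b < b := Nat.mod_lt _ (by omega)
    have hq : (p / b) * b + p % b = p := by
      rw [mul_comm]; exact Nat.div_add_mod p b
    obtain ⟨v, k, hk, hAk, hE⟩ := carry_exists b hb (p / b)
    -- first dangerous position : a = p / b, d = b - 1
    have hd2 : m ∣ (v + 1) * (b - 1) := by
      have hj : b - 1 - p % b < 2 * b - m := by omega
      have h1 := (H _ hj).symm
      have hn : p + (b - 1 - p % b) = (p / b) * b + (b - 1) := by omega
      rw [hn, show p / b * b + (b - 1) + m = p / b * b + (b - 1) + m from rfl] at h1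
      exact (genTM_dangerous b m (p / b) (b - 1) v hb hm hbm (by omega) (by omega) hE).mp h1
    have hv1 : 1 ≤ v := by
      rcases Nat.eq_zero_or_pos v with rfl | h1
      · simp at hd2; exact absurd hd2 hap
      · exact h1
    have hr0 : p % b = 0 := by
      by_contra hr
      obtain ⟨v', k', hk', hA'k, hE'⟩ := carry_exists b hb (p / b + 1)
      have hj2 : 2 * b - m - p % b < 2 * b - m := by omega
      have h2 := (H _ hj2).symm
      have hn2 : p + (2 * b - m - p % b) = (p / b + 1) * b + (b - m) := by
        rw [add_mul, one_mul]; omega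
      rw [hn2] at h2
      have hd2' : m ∣ (v' + 1) * (b - 1) :=
        (genTM_dangerous b m (p / b + 1) (b - m) v' hb hm hbm (by omega) (by omega) hE').mp h2
      have hv'1 : 1 ≤ v' := by
        rcases Nat.eq_zero_or_pos v' with rfl | h1
        · simp at hd2'; exact absurd hd2' hap
        · exact h1
      have hb1 : b ∣ p / b + 1 := by
        rw [hAk]; exact Dvd.dvd.mul_left (dvd_pow_self b (by omega)) k
      have hb2 : b ∣ p / b + 1 + 1 := by
        rw [hA'k]; exact Dvd.dvd.mul_left (dvd_pow_self b (by omega)) k'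
      have : b ∣ 1 := by
        have := Nat.dvd_sub hb2 hb1
        simpa using this
      have := Nat.le_of_dvd (by omega) this
      omega
    have hkpos : 1 ≤ k := by
      rcases Nat.eq_zero_or_pos k with rfl | h1
      · simp at hAk
      · exact h1
    refine ⟨k, v + 1, hkpos, by omega, hk, hd2, ?_⟩
    have hpb : p + b = k * b ^ (v + 1) := by
      rw [pow_succ, ← mul_assoc, ← hAk, add_mul, one_mul]
      omega
    omega
  · rintro ⟨k, q, hk1, hq1, hbk, hmq, hp⟩ j hj
    have hbq : b ≤ b ^ q := by
      calc b = b ^ 1 := (pow_one b).symm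
        _ ≤ b ^ q := Nat.pow_le_pow_right (by omega) hq1
    have hkbq : b ≤ k * b ^ q := le_trans hbq (Nat.le_mul_of_pos_left _ hk1)
    have hpb : p + b = k * b ^ q := by omega
    have hA1 : 1 ≤ k * b ^ (q - 1) :=
      Nat.one_le_iff_ne_zero.mpr (by positivity)
    have hA : (k * b ^ (q - 1) - 1) + 1 = k * b ^ (q - 1) := by omega
    set A := k * b ^ (q - 1) - 1 with hAdef
    have hAb : (A + 1) * b = k * b ^ q := by
      rw [hA, mul_assoc, ← pow_succ, show q - 1 + 1 = q from by omega]
    have hpA : p = A * b := by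
      have h1 : (A + 1) * b = A * b + b := by ring
      omega
    rcases Nat.lt_or_ge j b with hjb | hjb
    · rcases Nat.lt_or_ge (j + m) b with hjm | hjm
      · have he := genTM_easy b m A j hb hjm
        rw [show p + j = A * b + j from by omega,
          show A * b + j + m = A * b + j + m from rfl]
        exact he.symm
      · obtain ⟨v, k', hk', hAk', hEA⟩ := carry_exists b hb A
        have hv : v = q - 1 :=
          pow_val_unique b hb v (q - 1) k' k hk' hbk (hAk'.symm.trans hA)
        have hdvd : m ∣ (v + 1) * (b - 1) := by
          rw [hv, show q - 1 + 1 = q from by omega]; exact hmq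
        have := (genTM_dangerous b m A j v hb hm hbm hjm hjb hEA).mpr hdvd
        rw [show p + j = A * b + j from by omega]
        exact this.symm
    · have hjb2 : j - b + m < b := by omega
      have he := genTM_easy b m (A + 1) (j - b) hb hjb2
      have h1 : (A + 1) * b = A * b + b := by ring
      rw [show p + j = (A + 1) * b + (j - b) from by omega]
      exact he.symm
end

section
/- Let b and m be integers with 2 ≤ b ≤ m and (b, m) ≠ (2, 2), and let ℓ be an integer with 1 ≤ ℓ < b. Then for every p ∈ ℕ, the word t_{b,m} has period ℓ on the window [p, p + 2ℓ) (an occurrence of a square w² with |w| = ℓ) if and only if p = k·b^q − ℓ for some integers k ≥ 1 and q ≥ 1 with b ∤ k and m ∣ (q(b − 1) − ℓ). That is, the set of occurrences of squares of factors of length ℓ is B_ℓ = { k·b^q − ℓ : k ≥ 1, b ∤ k, q ≥ 1, m ∣ (q(b−1) − ℓ) }. -/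
private lemma digitsum_eq (b : ℕ) (hb : 2 ≤ b) (n : ℕ) :
    (Nat.digits b n).sum = n % b + (Nat.digits b (n / b)).sum := by
  rcases Nat.eq_zero_or_pos n with h | h
  · simp [h]
  · rw [Nat.digits_def' hb h]; simp

private lemma digitsum_lt (b : ℕ) (hb : 2 ≤ b) {n : ℕ} (h : n < b) :
    (Nat.digits b n).sum = n := by
  rw [digitsum_eq b hb, Nat.mod_eq_of_lt h, Nat.div_eq_of_lt h]
  simp

private lemma digitsum_split (b : ℕ) (hb : 2 ≤ b) :
    ∀ q a k : ℕ, a < b ^ q →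
      (Nat.digits b (a + b ^ q * k)).sum = (Nat.digits b a).sum + (Nat.digits b k).sum := by
  intro q
  induction q with
  | zero =>
      intro a k ha
      rw [pow_zero] at ha ⊢
      have ha0 : a = 0 := by omega
      subst ha0
      simp
  | succ q ih =>
      intro a k ha
      have hb0 : 0 < b := by omega
      have hrw : a + b ^ (q + 1) * k = a + b * (b ^ q * k) := by ring
      have h1 : (a + b ^ (q + 1) * k) % b = a % b := by
        rw [hrw, Nat.add_mul_mod_self_left]
      have h2 : (a + b ^ (q + 1) * k) / b = a / b + b ^ q * k := by
        rw [hrw, Nat.add_mul_div_left _ _ hb0]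
      have ha' : a / b < b ^ q := by
        apply Nat.div_lt_of_lt_mul
        calc a < b ^ (q + 1) := ha
          _ = b * b ^ q := by ring
      rw [digitsum_eq b hb (a + b ^ (q + 1) * k), h1, h2, ih _ _ ha',
        digitsum_eq b hb a]
      omega

private lemma digitsum_pow_sub (b : ℕ) (hb : 2 ≤ b) :
    ∀ q r : ℕ, 1 ≤ r → r < b →
      (Nat.digits b (b ^ (q + 1) - r)).sum = (b - r) + q * (b - 1) := by
  intro q
  induction q with
  | zero =>
      intro r hr1 hrb
      rw [pow_one, digitsum_lt b hb (by omega)]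
      omega
  | succ q ih =>
      intro r hr1 hrb
      have hb0 : 0 < b := by omega
      have hbq : 1 ≤ b ^ (q + 1) := Nat.one_le_pow _ _ hb0
      obtain ⟨x, hx⟩ : ∃ x, b ^ (q + 1) = x + 1 := ⟨b ^ (q + 1) - 1, by omega⟩
      have hq2 : b ^ (q + 2) = b * x + b := by
        have h : b ^ (q + 2) = b * b ^ (q + 1) := by ring
        rw [h, hx]; ring
      have hrw : b ^ (q + 2) - r = (b - r) + b * x := by omega
      have hmod : ((b - r) + b * x) % b = b - r := by
        rw [Nat.add_mul_mod_self_left]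
        exact Nat.mod_eq_of_lt (by omega)
      have hdiv : ((b - r) + b * x) / b = x := by
        rw [Nat.add_mul_div_left _ _ hb0, Nat.div_eq_of_lt (by omega)]
        omega
      have hx' : x = b ^ (q + 1) - 1 := by omega
      rw [hrw, digitsum_eq b hb, hmod, hdiv, hx', ih 1 (by omega) (by omega)]
      have h2 : (q + 1) * (b - 1) = q * (b - 1) + (b - 1) := by ring
      omega

private lemma digitsum_pred (b : ℕ) (hb : 2 ≤ b) {k : ℕ} (hk : ¬ b ∣ k) :
    (Nat.digits b k).sum = (Nat.digits b (k - 1)).sum + 1 := by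
  have hb0 : 0 < b := by omega
  have h1 : k % b ≠ 0 := fun h => hk (Nat.dvd_of_mod_eq_zero h)
  have hmodlt : k % b < b := Nat.mod_lt _ hb0
  have hdm := Nat.div_add_mod k b
  have hk1 : 1 ≤ k := by omega
  have hrw : k - 1 = b * (k / b) + (k % b - 1) := by omega
  have hmod : (k - 1) % b = k % b - 1 := by
    rw [hrw, Nat.mul_add_mod]
    exact Nat.mod_eq_of_lt (by omega)
  have hdiv : (k - 1) / b = k / b := by
    rw [hrw, Nat.mul_add_div hb0, Nat.div_eq_of_lt (show k % b - 1 < b by omega)]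
    omega
  rw [digitsum_eq b hb k, digitsum_eq b hb (k - 1), hmod, hdiv]
  omega

private lemma exists_extract (b : ℕ) (hb : 2 ≤ b) :
    ∀ n : ℕ, 0 < n → ∃ k q : ℕ, ¬ b ∣ k ∧ n = k * b ^ q := by
  intro n
  induction n using Nat.strong_induction_on with
  | _ n ih =>
      intro hn
      by_cases h : b ∣ n
      · obtain ⟨c, hc⟩ := h
        have hc0 : 0 < c := by
          rcases Nat.eq_zero_or_pos c with h0 | h0
          · subst h0; simp at hc; omega
          · exact h0
        have hlt : c < n := by
          have h2 : 2 * c ≤ b * c := Nat.mul_le_mul_right c hb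
          omega
        obtain ⟨k, q, hk, he⟩ := ih c hlt hc0
        exact ⟨k, q + 1, hk, by rw [hc, he]; ring⟩
      · exact ⟨n, 0, h, by simp⟩

private lemma digitsum_add_of_lt (b : ℕ) (hb : 2 ≤ b) {n ℓ : ℕ} (h : n % b + ℓ < b) :
    (Nat.digits b (n + ℓ)).sum = (Nat.digits b n).sum + ℓ := by
  have hb0 : 0 < b := by omega
  have hdm := Nat.div_add_mod n b
  have hrw : n + ℓ = b * (n / b) + (n % b + ℓ) := by omega
  have hmod : (n + ℓ) % b = n % b + ℓ := by
    rw [hrw, Nat.mul_add_mod, Nat.mod_eq_of_lt h]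
  have hdiv : (n + ℓ) / b = n / b := by
    rw [hrw, Nat.mul_add_div hb0, Nat.div_eq_of_lt h]
    omega
  rw [digitsum_eq b hb (n + ℓ), digitsum_eq b hb n, hmod, hdiv]
  omega

/-- in the square case (`2 ≤ b ≤ m`, `(b,m) ≠ (2,2)`), for `1 ≤ ℓ < b`,
the occurrences of squares of factors of length `ℓ` are exactly the positions
`k·b^q − ℓ` with `k ≥ 1`, `b ∤ k`, `q ≥ 1` and `m ∣ (q(b−1) − ℓ)`. -/
theorem genTM_square_occurrences (b m ℓ : ℕ) (hb : 2 ≤ b) (hbm : b ≤ m)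
    (hne : (b, m) ≠ (2, 2)) (hℓ1 : 1 ≤ ℓ) (hℓb : ℓ < b) :
    ∀ p : ℕ,
      (∀ j : ℕ, j < ℓ → genTM b m (p + j) = genTM b m (p + j + ℓ)) ↔
      ∃ k q : ℕ, 1 ≤ k ∧ 1 ≤ q ∧ ¬ b ∣ k ∧
        (m : ℤ) ∣ ((q : ℤ) * ((b : ℤ) - 1) - (ℓ : ℤ)) ∧ p = k * b ^ q - ℓ := by
  have hb0 : 0 < b := by omega
  intro p
  constructor
  · intro H
    -- every position in the window must produce a carry
    have hge : ∀ j : ℕ, j < ℓ → b ≤ (p + j) % b + ℓ := by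
      intro j hj
      by_contra hcon
      push_neg at hcon
      have hs := digitsum_add_of_lt b hb hcon
      have hH := H j hj
      simp only [genTM] at hH
      rw [hs] at hH
      push_cast at hH
      have hz : (ℓ : ZMod m) = 0 := (left_eq_add.mp hH)
      have hdvd : m ∣ ℓ := (ZMod.natCast_eq_zero_iff _ _).mp hz
      have := Nat.le_of_dvd (by omega) hdvd
      omega
    have hrge : b - ℓ ≤ p % b := by
      have := hge 0 (by omega)
      simp at this
      omega
    have hplt : p % b < b := Nat.mod_lt _ hb0
    have hr : p % b = b - ℓ := by
      by_contra hcon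
      have hj : b - p % b < ℓ := by omega
      have hmod : (p + (b - p % b)) % b = 0 := by
        have hdm := Nat.div_add_mod p b
        have hh : b * (p / b + 1) = b * (p / b) + b := by ring
        have : p + (b - p % b) = b * (p / b + 1) := by omega
        rw [this]
        exact Nat.mul_mod_right _ _
      have := hge (b - p % b) hj
      omega
    have hpl : p + ℓ = b * (p / b + 1) := by
      have hdm := Nat.div_add_mod p b
      have hh : b * (p / b + 1) = b * (p / b) + b := by ring
      omega
    obtain ⟨k, q, hk, heq⟩ := exists_extract b hb (p + ℓ) (by omega)
    have hk1 : 1 ≤ k := by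
      rcases Nat.eq_zero_or_pos k with h0 | h0
      · rw [h0] at heq; simp at heq; omega
      · exact h0
    have hq1 : 1 ≤ q := by
      rcases Nat.eq_zero_or_pos q with h0 | h0
      · exfalso
        rw [h0, pow_zero, mul_one] at heq
        exact hk ⟨p / b + 1, by omega⟩
      · exact h0
    obtain ⟨k', rfl⟩ : ∃ k', k = k' + 1 := ⟨k - 1, by omega⟩
    obtain ⟨q', rfl⟩ : ∃ q', q = q' + 1 := ⟨q - 1, by omega⟩
    have hbq : b ≤ b ^ (q' + 1) := Nat.le_self_pow (by omega) b
    have hmul : (k' + 1) * b ^ (q' + 1) = b ^ (q' + 1) * k' + b ^ (q' + 1) := by ring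
    have hmul2 : b ^ (q' + 1) * (k' + 1) = (k' + 1) * b ^ (q' + 1) := by ring
    have hp1 : p = (b ^ (q' + 1) - ℓ) + b ^ (q' + 1) * k' := by omega
    have hp2 : p + ℓ = 0 + b ^ (q' + 1) * (k' + 1) := by omega
    have hH := H 0 (by omega)
    simp only [genTM, Nat.add_zero] at hH
    rw [hp2, hp1, digitsum_split b hb _ _ _ (show b ^ (q' + 1) - ℓ < b ^ (q' + 1) by omega),
      digitsum_split b hb _ _ _ (by omega : (0:ℕ) < b ^ (q' + 1)),
      digitsum_pow_sub b hb q' ℓ (by omega) hℓb,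
      digitsum_pred b hb hk] at hH
    simp only [Nat.digits_zero, List.sum_nil, Nat.add_sub_cancel, Nat.zero_add] at hH
    have hmodeq := (ZMod.natCast_eq_natCast_iff _ _ _).mp hH
    have hd := (Nat.modEq_iff_dvd).mp hmodeq
    refine ⟨k' + 1, q' + 1, by omega, by omega, hk, ?_, by omega⟩
    obtain ⟨c, hc⟩ := hd
    refine ⟨-c, ?_⟩
    push_cast [Nat.cast_sub hℓb.le, Nat.cast_sub (by omega : 1 ≤ b)] at hc ⊢
    linear_combination -hc
  · rintro ⟨k, q, hk1, hq1, hbk, hdvd, rfl⟩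
    obtain ⟨k', rfl⟩ : ∃ k', k = k' + 1 := ⟨k - 1, by omega⟩
    obtain ⟨q', rfl⟩ : ∃ q', q = q' + 1 := ⟨q - 1, by omega⟩
    intro j hj
    have hbq : b ≤ b ^ (q' + 1) := Nat.le_self_pow (by omega) b
    have hmul : (k' + 1) * b ^ (q' + 1) = b ^ (q' + 1) * k' + b ^ (q' + 1) := by ring
    have hmul2 : b ^ (q' + 1) * (k' + 1) = (k' + 1) * b ^ (q' + 1) := by ring
    have h1 : (k' + 1) * b ^ (q' + 1) - ℓ + j
        = (b ^ (q' + 1) - (ℓ - j)) + b ^ (q' + 1) * k' := by omega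
    have h2 : (k' + 1) * b ^ (q' + 1) - ℓ + j + ℓ = j + b ^ (q' + 1) * (k' + 1) := by omega
    simp only [genTM]
    rw [h2, h1, digitsum_split b hb _ _ _
        (show b ^ (q' + 1) - (ℓ - j) < b ^ (q' + 1) by omega),
      digitsum_split b hb _ _ _ (by omega : j < b ^ (q' + 1)),
      digitsum_pow_sub b hb q' (ℓ - j) (by omega) (by omega),
      digitsum_lt b hb (by omega : j < b),
      digitsum_pred b hb hbk]
    simp only [Nat.add_sub_cancel]
    have h0 : (((q' + 1 : ℕ) : ℤ) * ((b : ℤ) - 1) - (ℓ : ℤ) : ℤ) = ((m : ℤ)) * (hdvd.choose) :=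
      hdvd.choose_spec
    have hz : ((((q' + 1 : ℕ) : ℤ) * ((b : ℤ) - 1) - (ℓ : ℤ) : ℤ) : ZMod m) = 0 :=
      (ZMod.intCast_zmod_eq_zero_iff_dvd _ _).mpr hdvd
    push_cast [Nat.cast_sub (by omega : ℓ - j ≤ b), Nat.cast_sub (by omega : j ≤ ℓ),
      Nat.cast_sub (by omega : 1 ≤ b)] at hz ⊢
    linear_combination hz
end

section
/- Let t = t_{2,2} be the classical Thue–Morse word, i.e., t(n) = s_2(n) mod 2 ∈ ℤ/2ℤ. Let B₁ = { k·2^q − 1 : k ≥ 1 odd, q ≥ 1 odd }. Then for every p ∈ ℕ, t has period 3 on the window [p, p + 6) (an occurrence of a square of a factor of length 3, i.e., t(p+j) = t(p+j+3) for 0 ≤ j < 3) if and only if p ∈ (8·B₁ + 3) ∪ (8·B₁ + 7), i.e., p = 8x + 3 or p = 8x + 7 for some x ∈ B₁. (Moreover B₁ is exactly the set of occurrences of squares of single letters of t.) -/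
/-- The classical Thue–Morse word: `t n = s_2(n) mod 2`, valued in `ZMod 2`. -/
def tm (n : ℕ) : ZMod 2 := ((Nat.digits 2 n).sum : ZMod 2)

/-- The set `B₁ = { k·2^q − 1 : k ≥ 1 odd, q ≥ 1 odd }`. -/
def Bone : Set ℕ := {p : ℕ | ∃ k q : ℕ, 1 ≤ k ∧ Odd k ∧ 1 ≤ q ∧ Odd q ∧ p = k * 2 ^ q - 1}

lemma tm_even (m : ℕ) : tm (2*m) = tm m := by
  rcases Nat.eq_zero_or_pos m with h | h
  · subst h; rfl
  · unfold tm
    rw [Nat.digits_def' (by norm_num : (1:ℕ) < 2) (by omega : 0 < 2*m)]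
    have h1 : (2*m) % 2 = 0 := by omega
    have h2 : 2*m/2 = m := by omega
    rw [h1, h2]; simp

lemma tm_odd (m : ℕ) : tm (2*m+1) = tm m + 1 := by
  unfold tm
  rw [Nat.digits_def' (by norm_num : (1:ℕ) < 2) (by omega : 0 < 2*m+1)]
  have h1 : (2*m+1) % 2 = 1 := by omega
  have h2 : (2*m+1)/2 = m := by omega
  rw [h1, h2]
  push_cast [List.sum_cons]
  ring

lemma val_two_mul (m : ℕ) (hm : m ≠ 0) :
    padicValNat 2 (2*m) = padicValNat 2 m + 1 := by
  haveI : Fact (Nat.Prime 2) := ⟨Nat.prime_two⟩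
  rw [padicValNat.mul (by norm_num) hm, padicValNat.self (by norm_num)]
  omega

lemma val_odd (m : ℕ) (hm : m % 2 = 1) : padicValNat 2 m = 0 :=
  padicValNat.eq_zero_of_not_dvd (by omega)

lemma tm_eq_iff (n : ℕ) : tm n = tm (n+1) ↔ Odd (padicValNat 2 (n+1)) := by
  induction n using Nat.strong_induction_on with
  | _ n ih =>
    rcases Nat.even_or_odd n with ⟨m, hm⟩ | ⟨m, hm⟩
    · have hp : n = 2*m := by omega
      subst hp
      rw [show 2*m+1 = 2*m+1 from rfl, tm_even, tm_odd, val_odd _ (by omega)]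
      constructor
      · intro h; exact absurd h (by revert h; generalize tm m = a; revert a; decide)
      · intro h; simp [Nat.odd_iff] at h
    · have hp : n = 2*m+1 := by omega
      subst hp
      have key := ih m (by omega)
      rw [tm_odd, show 2*m+1+1 = 2*(m+1) from by ring, tm_even,
        val_two_mul (m+1) (by omega)]
      constructor
      · intro h
        have hne : ¬ tm m = tm (m+1) := by
          revert h; generalize tm m = a; generalize tm (m+1) = b; revert a b; decide
        rw [key] at hne
        simp [Nat.odd_iff, Nat.even_iff] at *
        omega
      · intro h
        have hne : ¬ tm m = tm (m+1) := by
          rw [key]; simp [Nat.odd_iff] at *; omega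
        revert hne; generalize tm m = a; generalize tm (m+1) = b; revert a b; decide

lemma mem_Bone_iff (p : ℕ) : p ∈ Bone ↔ Odd (padicValNat 2 (p+1)) := by
  haveI : Fact (Nat.Prime 2) := ⟨Nat.prime_two⟩
  constructor
  · rintro ⟨k, q, hk1, hk, hq1, hq, rfl⟩
    have hik : 1 ≤ k * 2^q := Nat.one_le_iff_ne_zero.2 (by positivity)
    have h1 : k * 2^q - 1 + 1 = k * 2^q := by omega
    rw [h1, padicValNat.mul (by omega) (by positivity),
      padicValNat.prime_pow, val_odd k (Nat.odd_iff.1 hk), zero_add]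
    exact hq
  · intro hv
    set v := padicValNat 2 (p+1) with hvdef
    have hne : p + 1 ≠ 0 := by omega
    have hfac : (p+1).factorization 2 = v := Nat.factorization_def _ Nat.prime_two
    have hmul : 2 ^ v * ((p+1) / 2 ^ v) = p + 1 := by
      conv_lhs => rw [← hfac]
      exact Nat.ordProj_mul_ordCompl_eq_self (p+1) 2
    rw [mul_comm] at hmul
    have hodd : ¬ 2 ∣ (p+1) / 2 ^ v := by
      conv in 2^v => rw [← hfac]
      exact Nat.not_dvd_ordCompl Nat.prime_two hne
    refine ⟨(p+1) / 2 ^ v, v, ?_, ?_, ?_, hv, ?_⟩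
    · rcases Nat.eq_zero_or_pos ((p+1) / 2 ^ v) with h | h
      · rw [h, zero_mul] at hmul; omega
      · omega
    · exact Nat.odd_iff.2 (by omega)
    · rcases hv with ⟨c, hc⟩; omega
    · omega

lemma z1 : ∀ a b c : ZMod 2, a = b + 1 → a + 1 = c → b = c + 1 → False := by decide
lemma z2 : ∀ a b c : ZMod 2, a + 1 = c → b = c + 1 → b = a := by decide
lemma z3 : ∀ a b c : ZMod 2, b = c + 1 → b + 1 = a → c = a := by decide

lemma v3 (x : ℕ) : tm (8*x+3) = tm x + 1 + 1 := by
  rw [show 8*x+3 = 2*(4*x+1)+1 from by ring, tm_odd,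
    show 4*x+1 = 2*(2*x)+1 from by ring, tm_odd, tm_even]
lemma v4 (x : ℕ) : tm (8*x+4) = tm x + 1 := by
  rw [show 8*x+4 = 2*(2*(2*x+1)) from by ring, tm_even, tm_even, tm_odd]
lemma v5 (x : ℕ) : tm (8*x+5) = tm x + 1 + 1 := by
  rw [show 8*x+5 = 2*(2*(2*x+1))+1 from by ring, tm_odd, tm_even, tm_odd]
lemma v6 (x : ℕ) : tm (8*x+6) = tm x + 1 + 1 := by
  rw [show 8*x+6 = 2*(2*(2*x+1)+1) from by ring, tm_even, tm_odd, tm_odd]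
lemma v7 (x : ℕ) : tm (8*x+7) = tm x + 1 + 1 + 1 := by
  rw [show 8*x+7 = 2*(2*(2*x+1)+1)+1 from by ring, tm_odd, tm_odd, tm_odd]
lemma v8 (x : ℕ) : tm (8*x+8) = tm (x+1) := by
  rw [show 8*x+8 = 2*(2*(2*(x+1))) from by ring, tm_even, tm_even, tm_even]
lemma v9 (x : ℕ) : tm (8*x+9) = tm (x+1) + 1 := by
  rw [show 8*x+9 = 2*(2*(2*(x+1)))+1 from by ring, tm_odd, tm_even, tm_even]
lemma v10 (x : ℕ) : tm (8*x+10) = tm (x+1) + 1 := by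
  rw [show 8*x+10 = 2*(2*(2*(x+1))+1) from by ring, tm_even, tm_odd, tm_even]
lemma v11 (x : ℕ) : tm (8*x+11) = tm (x+1) + 1 + 1 := by
  rw [show 8*x+11 = 2*(2*(2*(x+1))+1)+1 from by ring, tm_odd, tm_odd, tm_even]
lemma v12 (x : ℕ) : tm (8*x+12) = tm (x+1) + 1 := by
  rw [show 8*x+12 = 2*(2*(2*(x+1)+1)) from by ring, tm_even, tm_even, tm_odd]

/-- in the Thue–Morse word, a square of a factor of length `3` occurs
at position `p` iff `p ∈ (8·B₁ + 3) ∪ (8·B₁ + 7)`; moreover `B₁` is exactly the set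
of occurrences of squares of single letters. -/
theorem tm_length_three_square_occurrences :
    (∀ p : ℕ,
      (∀ j : ℕ, j < 3 → tm (p + j) = tm (p + j + 3)) ↔
      ∃ x ∈ Bone, p = 8 * x + 3 ∨ p = 8 * x + 7) ∧
    (∀ p : ℕ, tm p = tm (p + 1) ↔ p ∈ Bone) := by
  constructor
  · intro p
    constructor
    · intro h
      have h0 := h 0 (by norm_num)
      have h1 := h 1 (by norm_num)
      have h2 := h 2 (by norm_num)
      rcases Nat.even_or_odd p with ⟨m, hm⟩ | ⟨m, hm⟩
      · exfalso
        have hp : p = 2*m := by omega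
        subst hp
        rw [show 2*m+0 = 2*m from by ring, show 2*m+0+3 = 2*(m+1)+1 from by ring,
          tm_even, tm_odd] at h0
        rw [show 2*m+1+3 = 2*(m+2) from by ring, tm_odd, tm_even] at h1
        rw [show 2*m+2 = 2*(m+1) from by ring, show 2*(m+1)+3 = 2*(m+2)+1 from by ring,
          tm_even, tm_odd] at h2
        exact z1 _ _ _ h0 h1 h2
      · have hp : p = 2*m+1 := by omega
        subst hp
        rw [show 2*m+1+0 = 2*m+1 from by ring, show 2*m+1+0+3 = 2*(m+2) from by ring,
          tm_odd, tm_even] at h0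
        rw [show 2*m+1+1 = 2*(m+1) from by ring, show 2*(m+1)+3 = 2*(m+2)+1 from by ring,
          tm_even, tm_odd] at h1
        rw [show 2*m+1+2 = 2*(m+1)+1 from by ring, show 2*(m+1)+1+3 = 2*(m+3) from by ring,
          tm_odd, tm_even] at h2
        -- h0 : tm m + 1 = tm (m+2), h1 : tm (m+1) = tm (m+2) + 1, h2 : tm (m+1)+1 = tm (m+3)
        have c1 : tm m = tm (m+1) := (z2 _ _ _ h0 h1).symm
        have c2 : tm (m+2) = tm (m+3) := z3 _ _ _ h1 h2
        have hv1 : Odd (padicValNat 2 (m+1)) := (tm_eq_iff m).1 c1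
        have hv3 : Odd (padicValNat 2 (m+3)) := by
          have := (tm_eq_iff (m+2)).1 c2
          rwa [show m+2+1 = m+3 from rfl] at this
        -- m must be odd
        rcases Nat.even_or_odd m with ⟨a, ha⟩ | ⟨a, ha⟩
        · exfalso
          rw [val_odd (m+1) (by omega)] at hv1
          simp [Nat.odd_iff] at hv1
        · have hma : m = 2*a+1 := by omega
          subst hma
          rw [show 2*a+1+1 = 2*(a+1) from by ring, val_two_mul (a+1) (by omega)] at hv1
          rw [show 2*a+1+3 = 2*(a+2) from by ring, val_two_mul (a+2) (by omega)] at hv3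
          have he1 : padicValNat 2 (a+1) % 2 = 0 := by
            rw [Nat.odd_iff] at hv1; omega
          have he2 : padicValNat 2 (a+2) % 2 = 0 := by
            rw [Nat.odd_iff] at hv3; omega
          rcases Nat.even_or_odd a with ⟨b, hb⟩ | ⟨b, hb⟩
          · -- a = 2b, p = 8b+3
            have hab : a = 2*b := by omega
            subst hab
            rw [show 2*b+2 = 2*(b+1) from by ring, val_two_mul (b+1) (by omega)] at he2
            refine ⟨b, (mem_Bone_iff b).2 (Nat.odd_iff.2 (by omega)), Or.inl (by ring)⟩
          · have hab : a = 2*b+1 := by omega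
            subst hab
            rw [show 2*b+1+1 = 2*(b+1) from by ring, val_two_mul (b+1) (by omega)] at he1
            refine ⟨b, (mem_Bone_iff b).2 (Nat.odd_iff.2 (by omega)), Or.inr (by ring)⟩
    · rintro ⟨x, hx, hp | hp⟩ <;> subst hp <;>
        have hxe : tm x = tm (x+1) := (tm_eq_iff x).2 ((mem_Bone_iff x).1 hx) <;>
        intro j hj <;> interval_cases j
      · show tm (8*x+3) = tm (8*x+6)
        rw [v3, v6]
      · show tm (8*x+4) = tm (8*x+7)
        rw [v4, v7]; rw [hxe]; generalize tm (x+1) = a; revert a; decide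
      · show tm (8*x+5) = tm (8*x+8)
        rw [v5, v8, hxe]; generalize tm (x+1) = a; revert a; decide
      · show tm (8*x+7) = tm (8*x+10)
        rw [v7, v10, hxe]; generalize tm (x+1) = a; revert a; decide
      · show tm (8*x+8) = tm (8*x+11)
        rw [v8, v11]; generalize tm (x+1) = a; revert a; decide
      · show tm (8*x+9) = tm (8*x+12)
        rw [v9, v12]
  · intro p
    rw [tm_eq_iff, mem_Bone_iff]
end

section
/- Let b and m be integers with 2 ≤ b ≤ m, and let ℓ be an integer with 1 ≤ ℓ < b. Then there exists a critical factor of t_{b,m} of length ℓ — that is, there exists i ≥ 0 with t(i+j) = t(i+j+ℓ) for all 0 ≤ j < ℓ (a square of a factor of length ℓ occurs in t) — if and only if gcd(b − 1, m) divides ℓ. -/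
/-!
Since `s_b(n) ≡ n (mod b - 1)`, an equality `t(i) = t(i + ℓ)` makes `s_b(i + ℓ) - s_b(i)` divisible
by `m` and congruent to `ℓ` modulo `b - 1`, so `gcd(b - 1, m) ∣ ℓ`. Conversely, for `j < ℓ ≤ b`
the digit sums around a power of `b` are explicit: `s_b(b^(c+1) - ℓ + j) = (b - ℓ + j) + c (b - 1)`
and `s_b(b^(c+1) + j) = 1 + j`. So the window starting at `b^(c+1) - ℓ` is a square as soon as
`(c + 1)(b - 1) ≡ ℓ (mod m)`, a linear congruence that is solvable when `gcd(b - 1, m) ∣ ℓ`.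
-/

open Nat

theorem Nat.digits_sum_modEq (b n : ℕ) : (b.digits n).sum ≡ n [MOD b - 1] :=
  (Nat.modEq_iff_dvd' (digit_sum_le b n)).2
    ⟨_, (sub_one_mul_sum_log_div_pow_eq_sub_sum_digits n).symm⟩

theorem Nat.digits_sum_add_base_mul_s19 {b r : ℕ} (hb : 1 < b) (hr : r < b) (n : ℕ) :
    (b.digits (r + b * n)).sum = r + (b.digits n).sum := by
  by_cases h : r = 0 ∧ n = 0
  · simp [h.1, h.2]
  · rw [digits_add b hb r n hr (by tauto), List.sum_cons]

theorem Nat.digits_sum_base_pow {b : ℕ} (hb : 1 < b) (c : ℕ) : (b.digits (b ^ c)).sum = 1 := by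
  induction c with
  | zero => simp [digits_of_lt b 1 one_ne_zero hb]
  | succ c ih => rw [pow_succ', ← zero_add (b * _), digits_sum_add_base_mul_s19 hb (by omega), ih]

theorem Nat.digits_sum_base_pow_sub_one {b : ℕ} (hb : 1 < b) (c : ℕ) :
    (b.digits (b ^ c - 1)).sum = c * (b - 1) := by
  induction c with
  | zero => simp
  | succ c ih =>
    have hpos : b ≤ b * b ^ c := Nat.le_mul_of_pos_right b (Nat.pow_pos (by omega))
    have hsplit : b ^ (c + 1) - 1 = (b - 1) + b * (b ^ c - 1) := by
      rw [pow_succ', Nat.mul_sub_one]; omega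
    rw [hsplit, digits_sum_add_base_mul_s19 hb (by omega), ih, succ_mul]
    ring

section GenTM

variable {b m : ℕ}

theorem genTM_eq_genTM_iff {p q : ℕ} :
    genTM b m p = genTM b m q ↔ (b.digits p).sum ≡ (b.digits q).sum [MOD m] :=
  ZMod.natCast_eq_natCast_iff _ _ _

theorem gcd_sub_one_dvd_of_genTM_eq {i ℓ : ℕ} (h : genTM b m i = genTM b m (i + ℓ)) :
    Nat.gcd (b - 1) m ∣ ℓ := by
  have hsum (n : ℕ) : (b.digits n).sum ≡ n [MOD Nat.gcd (b - 1) m] :=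
    (digits_sum_modEq b n).of_dvd (Nat.gcd_dvd_left _ _)
  have hshift : i + 0 ≡ i + ℓ [MOD Nat.gcd (b - 1) m] :=
    (hsum i).symm.trans <|
      ((genTM_eq_genTM_iff.1 h).of_dvd (Nat.gcd_dvd_right _ _)).trans (hsum _)
  exact modEq_zero_iff_dvd.1 (hshift.add_left_cancel' i).symm

theorem genTM_base_pow_sub_add_eq {ℓ c j : ℕ} (hb : 1 < b) (hℓ : ℓ ≤ b)
    (hc : (c + 1) * (b - 1) ≡ ℓ [MOD m]) (hj : j < ℓ) :
    genTM b m (b ^ (c + 1) - ℓ + j) = genTM b m (b ^ (c + 1) - ℓ + j + ℓ) := by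
  have hpos : b ≤ b * b ^ c := Nat.le_mul_of_pos_right b (Nat.pow_pos (by omega))
  have hmul : b * (b ^ c - 1) = b * b ^ c - b := Nat.mul_sub_one b _
  have hlow : b ^ (c + 1) - ℓ + j = (b - ℓ + j) + b * (b ^ c - 1) := by
    rw [pow_succ', hmul]; omega
  have hhigh : b ^ (c + 1) - ℓ + j + ℓ = j + b * b ^ c := by
    rw [pow_succ']; omega
  rw [genTM_eq_genTM_iff, hhigh, hlow, digits_sum_add_base_mul_s19 hb (by omega),
    digits_sum_add_base_mul_s19 hb (by omega), digits_sum_base_pow_sub_one hb, digits_sum_base_pow hb]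
  refine Nat.ModEq.add_right_cancel' ℓ ?_
  have hlhs : b - ℓ + j + c * (b - 1) + ℓ = j + 1 + (c + 1) * (b - 1) := by
    rw [succ_mul]; omega
  rw [hlhs]
  exact Nat.ModEq.add_left _ hc

end GenTM

theorem ZMod.exists_mul_eq_natCast_of_gcd_dvd {a m ℓ : ℕ} (h : Nat.gcd a m ∣ ℓ) :
    ∃ k : ZMod m, k * a = ℓ := by
  obtain ⟨e, rfl⟩ := h
  have hbezout := congrArg (Int.cast : ℤ → ZMod m) (Nat.gcd_eq_gcd_ab a m)
  push_cast [ZMod.natCast_self] at hbezout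
  refine ⟨Nat.gcdA a m * e, ?_⟩
  push_cast
  linear_combination (e : ZMod m) * hbezout.symm

theorem Nat.exists_succ_mul_modEq_of_gcd_dvd {a m ℓ : ℕ} [NeZero m] (h : Nat.gcd a m ∣ ℓ) :
    ∃ c : ℕ, (c + 1) * a ≡ ℓ [MOD m] := by
  obtain ⟨k, hk⟩ := ZMod.exists_mul_eq_natCast_of_gcd_dvd h
  refine ⟨(k - 1).val, (ZMod.natCast_eq_natCast_iff _ _ _).1 ?_⟩
  push_cast [ZMod.natCast_zmod_val]
  simpa using hk

/-- in the square case (`2 ≤ b ≤ m`), for `1 ≤ ℓ < b`, there exists a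
critical factor of length `ℓ` (a square of a factor of length `ℓ` occurs in `t_{b,m}`)
if and only if `gcd(b − 1, m) ∣ ℓ`. -/
theorem genTM_exists_critical_factor_iff (b m ℓ : ℕ) (hb : 2 ≤ b) (hbm : b ≤ m)
    (hℓ1 : 1 ≤ ℓ) (hℓb : ℓ < b) :
    (∃ i : ℕ, ∀ j : ℕ, j < ℓ → genTM b m (i + j) = genTM b m (i + j + ℓ)) ↔
    Nat.gcd (b - 1) m ∣ ℓ := by
  constructor
  · rintro ⟨i, hi⟩
    exact gcd_sub_one_dvd_of_genTM_eq (hi 0 hℓ1)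
  · intro hdvd
    have : NeZero m := ⟨by omega⟩
    obtain ⟨c, hc⟩ := exists_succ_mul_modEq_of_gcd_dvd hdvd
    exact ⟨b ^ (c + 1) - ℓ, fun j hj => genTM_base_pow_sub_add_eq hb hℓb.le hc hj⟩
end
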